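/- arXiv:1206.5783 — 11 statements merged into one kernel-verified Lean document; each statement's English description precedes it below -/
import Mathlib

section
/- A polynomial p ∈ ℝ[x₁,…,xₙ] satisfies p ∈ S if and only if p(x₁²,…,xₙ²) is a sum of squares of polynomials in ℝ[x₁,…,xₙ]. -/
open MvPolynomial

def InS (n : ℕ) (p : MvPolynomial (Fin n) ℝ) : Prop :=
  ∃ r : (Fin n → Fin 2) → MvPolynomial (Fin n) ℝ,
    (∀ ε, IsSumSq (r ε)) ∧
    p = ∑ ε : Fin n → Fin 2, r ε * ∏ j, X j ^ (ε j : ℕ)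

/-!
Grade `R[x]` by the parity vector of the exponents, an element of `(ℤ/2)ⁿ`. The substitution
`xᵢ ↦ xᵢ²` (`expand 2`) is injective with image in degree `0`, and every polynomial of degree `ε`
is `x^ε · expand 2 v`. Writing `q = ∑_ε x^ε · expand 2 v_ε`, the degree-`0` part of `q²` is
`∑_ε (x^ε)² (expand 2 v_ε)² = expand 2 (∑_ε v_ε² x^ε)`, because a cross term has degree
`ε + ε' ≠ 0`. So if `p(x²) = ∑ᵢ qᵢ²`, taking degree-`0` parts gives
`p(x²) = expand 2 (∑_ε (∑ᵢ v_{iε}²) x^ε)`, and injectivity of `expand 2` recovers `p`.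
Conversely, `x^ε` becomes `(x^ε)²` under the substitution.
-/

theorem IsSumSq.map {R S F : Type*} [NonUnitalNonAssocSemiring R] [NonUnitalNonAssocSemiring S]
    [FunLike F R S] [NonUnitalRingHomClass F R S] (f : F) {s : R} (hs : IsSumSq s) :
    IsSumSq (f s) := by
  induction hs with
  | zero => simp
  | sq_add a _ ih => simpa using IsSumSq.sq_add (f a) ih

theorem Fin.val_nsmul_one {n : ℕ} [NeZero n] (k : ℕ) : (k • (1 : Fin n)).val = k % n := by
  induction k with
  | zero => simp
  | succ k ih => rw [succ_nsmul, Fin.val_add, ih, Fin.val_one', Nat.add_mod_mod, Nat.mod_add_mod]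

namespace MvPolynomial

variable {σ R : Type*} [CommSemiring R]

theorem expand_two_prod_X_pow [Fintype σ] (ε : σ → Fin 2) :
    expand 2 (∏ j, X j ^ (ε j : ℕ) : MvPolynomial σ R) =
      (∏ j, X j ^ (ε j : ℕ)) * ∏ j, X j ^ (ε j : ℕ) := by
  simp [map_prod, ← Finset.prod_mul_distrib, ← pow_mul, ← pow_add, two_mul]

variable [DecidableEq σ]

variable (σ) in
def parityWeight : σ → σ → Fin 2 := fun i => Pi.single i 1

theorem weight_parityWeight (d : σ →₀ ℕ) :
    Finsupp.weight (parityWeight σ) d = fun j => d j • 1 := by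
  funext j
  simp +contextual [Finsupp.weight_apply, Finsupp.sum, parityWeight, Pi.single_apply]

theorem isWeightedHomogeneous_expand_two (p : MvPolynomial σ R) :
    IsWeightedHomogeneous (parityWeight σ) (expand 2 p) 0 := by
  induction p using induction_on' with
  | monomial d r =>
    refine expand_monomial 2 d r ▸ isWeightedHomogeneous_monomial _ _ _ ?_
    funext j
    ext
    simp [weight_parityWeight, Fin.val_nsmul_one]
  | add p q hp hq => simpa using hp.add hq

variable [Fintype σ]

theorem IsWeightedHomogeneous.exists_eq_prod_X_pow_mul_expand_two {q : MvPolynomial σ R}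
    {ε : σ → Fin 2} (hq : IsWeightedHomogeneous (parityWeight σ) q ε) :
    ∃ v, q = (∏ j, X j ^ (ε j : ℕ)) * expand 2 v := by
  induction hq using IsWeightedHomogeneous.induction_on with
  | zero => exact ⟨0, by simp⟩
  | add p q _ _ hp hq =>
    obtain ⟨u, rfl⟩ := hp
    obtain ⟨v, rfl⟩ := hq
    exact ⟨u + v, by rw [map_add, mul_add]⟩
  | monomial d r hd =>
    refine ⟨C r * ∏ j, X j ^ (d j / 2), ?_⟩
    simp only [monomial_eq, Finsupp.prod_fintype _ _ fun _ => pow_zero _, map_mul, expand_C,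
      map_prod, map_pow, expand_X, ← pow_mul]
    rw [mul_left_comm, ← Finset.prod_mul_distrib]
    refine congrArg _ (Finset.prod_congr rfl fun j _ => ?_)
    rw [← pow_add, ← hd, weight_parityWeight, Fin.val_nsmul_one, Nat.mod_add_div]

theorem weightedHomogeneousComponent_zero_sum_mul_self
    {a : (σ → Fin 2) → MvPolynomial σ R}
    (ha : ∀ ε, IsWeightedHomogeneous (parityWeight σ) (a ε) ε) :
    weightedHomogeneousComponent (parityWeight σ) 0 ((∑ ε, a ε) * ∑ ε, a ε) =
      ∑ ε, a ε * a ε := by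
  have add_self : ∀ η : σ → Fin 2, η + η = 0 := fun η => by
    funext j
    exact (by decide : ∀ b : Fin 2, b + b = 0) (η j)
  rw [Finset.sum_mul_sum, map_sum]
  refine Finset.sum_congr rfl fun ε _ => ?_
  rw [map_sum, Finset.sum_eq_single ε]
  · exact (add_self ε ▸ (ha ε).mul (ha ε)).weightedHomogeneousComponent_same
  · refine fun ε' _ hne => ((ha ε).mul (ha ε')).weightedHomogeneousComponent_ne 0 fun h => hne ?_
    exact (eq_neg_of_add_eq_zero_right h.symm).trans (neg_eq_of_add_eq_zero_right (add_self ε))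
  · simp

theorem exists_weightedHomogeneousComponent_zero_mul_self_eq_expand_two (q : MvPolynomial σ R) :
    ∃ v : (σ → Fin 2) → MvPolynomial σ R,
      weightedHomogeneousComponent (parityWeight σ) 0 (q * q) =
        expand 2 (∑ ε, v ε * v ε * ∏ j, X j ^ (ε j : ℕ)) := by
  have hcomp (ε : σ → Fin 2) :=
    weightedHomogeneousComponent_isWeightedHomogeneous (w := parityWeight σ) ε q
  choose v hv using fun ε => (hcomp ε).exists_eq_prod_X_pow_mul_expand_two
  have hq : q = ∑ ε, weightedHomogeneousComponent (parityWeight σ) ε q := by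
    rw [← finsum_eq_sum_of_fintype, sum_weightedHomogeneousComponent]
  refine ⟨v, ?_⟩
  rw [hq, weightedHomogeneousComponent_zero_sum_mul_self hcomp, map_sum]
  refine Finset.sum_congr rfl fun ε _ => ?_
  rw [hv ε, map_mul, map_mul, expand_two_prod_X_pow]
  ring

theorem IsSumSq.exists_weightedHomogeneousComponent_zero_eq_expand_two {q : MvPolynomial σ R}
    (hq : IsSumSq q) :
    ∃ r : (σ → Fin 2) → MvPolynomial σ R, (∀ ε, IsSumSq (r ε)) ∧
      weightedHomogeneousComponent (parityWeight σ) 0 q =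
        expand 2 (∑ ε, r ε * ∏ j, X j ^ (ε j : ℕ)) := by
  induction hq with
  | zero => exact ⟨0, fun _ => .zero, by simp⟩
  | sq_add a _ ih =>
    obtain ⟨r, hr, hs⟩ := ih
    obtain ⟨v, hv⟩ := exists_weightedHomogeneousComponent_zero_mul_self_eq_expand_two a
    refine ⟨fun ε => v ε * v ε + r ε, fun ε => .sq_add (v ε) (hr ε), ?_⟩
    simp only [map_add, hv, hs, add_mul, Finset.sum_add_distrib]

theorem isSumSq_expand_two_sum_mul_prod_X_pow {r : (σ → Fin 2) → MvPolynomial σ R}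
    (hr : ∀ ε, IsSumSq (r ε)) : IsSumSq (expand 2 (∑ ε, r ε * ∏ j, X j ^ (ε j : ℕ))) := by
  rw [map_sum]
  refine IsSumSq.sum fun ε _ => ?_
  rw [map_mul, expand_two_prod_X_pow]
  exact ((hr ε).map _).mul (.mul_self _)

end MvPolynomial

theorem mem_S_iff_subst_squares_isSumSq (n : ℕ) (p : MvPolynomial (Fin n) ℝ) :
    InS n p ↔ IsSumSq (bind₁ (fun i : Fin n => (X i : MvPolynomial (Fin n) ℝ) ^ 2) p) := by
  change _ ↔ IsSumSq (expand 2 p)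
  constructor
  · rintro ⟨r, hr, rfl⟩
    exact isSumSq_expand_two_sum_mul_prod_X_pow hr
  · intro h
    obtain ⟨r, hr, hE⟩ := h.exists_weightedHomogeneousComponent_zero_eq_expand_two
    rw [(isWeightedHomogeneous_expand_two p).weightedHomogeneousComponent_same] at hE
    exact ⟨r, hr, expand_injective two_pos hE⟩
end

section
/- Let α, β be partitions of d into at most n parts with α ⊵ β in dominance order (i.e., α₁+…+α_k ≥ β₁+…+β_k for all k, with equal total sum d). Then for all nonnegative reals x₁,…,xₙ, the normalized monomial symmetric functions satisfy [α](x) ≥ [β](x), where [α] = (1/n!) Σ_{σ∈Sₙ} Π_j x_{σ(j)}^{α_j} (Muirhead's inequality). -/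
/-!
Robin Hood transfers (Hardy–Littlewood–Pólya). If `β ≠ α` is dominated by `α`, let `i` be the
first index at which the partial sums of `β` drop strictly below those of `α`, and `j` the next one
after which they meet again. Moving one unit of `β` from `j` to `i` gives a partition that is still
dominated by `α` and has smaller `∑ k, k * β k`, so induction reduces the theorem to a single
transfer. For a single transfer, pair each permutation `σ` with `σ * swap i j`: the two terms
differ only in the exponents of `X = x (σ i)` and `Y = x (σ j)`, and
`X ^ p * Y ^ (q + 1) + Y ^ p * X ^ (q + 1) ≤ X ^ (p + 1) * Y ^ q + Y ^ (p + 1) * X ^ q` for `q ≤ p`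
is the rearrangement inequality for `t ↦ t` and `t ↦ t ^ (p - q)`.
-/

open Finset

theorem Fintype.sum_le_sum_of_add_comp_le {ι M : Type*} [Fintype ι] [AddCommMonoid M]
    [LinearOrder M] [IsOrderedCancelAddMonoid M] (e : ι ≃ ι) {f g : ι → M}
    (h : ∀ a, f a + f (e a) ≤ g a + g (e a)) : ∑ a, f a ≤ ∑ a, g a := by
  have hdouble : ∑ a, f a + ∑ a, f a ≤ ∑ a, g a + ∑ a, g a := by
    calc ∑ a, f a + ∑ a, f a = ∑ a, (f a + f (e a)) := by rw [sum_add_distrib, e.sum_comp]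
      _ ≤ ∑ a, (g a + g (e a)) := sum_le_sum fun a _ => h a
      _ = ∑ a, g a + ∑ a, g a := by rw [sum_add_distrib, e.sum_comp]
  by_contra! hlt
  exact (add_lt_add hlt hlt).not_ge hdouble

theorem Fintype.prod_eq_mul_mul_prod_compl_pair {ι M : Type*} [Fintype ι] [DecidableEq ι]
    [CommMonoid M] {i j : ι} (hij : i ≠ j) (f : ι → M) : ∏ k, f k = f i * f j * ∏ k ∈ {i, j}ᶜ, f k := by
  rw [← prod_mul_prod_compl {i, j}, prod_pair hij]

section OrderedRing

variable {R : Type*} [CommRing R] [LinearOrder R] [IsStrictOrderedRing R]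

theorem pow_mul_pow_add_pow_mul_pow_le {X Y : R} (hX : 0 ≤ X) (hY : 0 ≤ Y) {p q : ℕ} (hqp : q ≤ p) :
    X ^ p * Y ^ (q + 1) + Y ^ p * X ^ (q + 1) ≤ X ^ (p + 1) * Y ^ q + Y ^ (p + 1) * X ^ q := by
  obtain ⟨r, rfl⟩ := Nat.exists_eq_add_of_le hqp
  have hrearrange : X ^ r * Y + Y ^ r * X ≤ X ^ r * X + Y ^ r * Y :=
    (monovaryOn_id_iff.2 (pow_left_monotoneOn (n := r))).mul_add_mul_le_mul_add_mul
      (Set.mem_Ici.2 hX) (Set.mem_Ici.2 hY)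
  calc X ^ (q + r) * Y ^ (q + 1) + Y ^ (q + r) * X ^ (q + 1)
      = X ^ q * Y ^ q * (X ^ r * Y + Y ^ r * X) := by ring
    _ ≤ X ^ q * Y ^ q * (X ^ r * X + Y ^ r * Y) := by gcongr
    _ = X ^ (q + r + 1) * Y ^ q + Y ^ (q + r + 1) * X ^ q := by ring

def symmSum {ι : Type*} [Fintype ι] [DecidableEq ι] (x : ι → R) (γ : ι → ℕ) : R :=
  ∑ σ : Equiv.Perm ι, ∏ k, x (σ k) ^ γ k

theorem symmSum_le_symmSum_of_transfer {ι : Type*} [Fintype ι] [DecidableEq ι] {x : ι → R}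
    (hx : ∀ k, 0 ≤ x k) {i j : ι} (hij : i ≠ j) {β β' : ι → ℕ}
    (htransfer : β' + Pi.single j 1 = β + Pi.single i 1) (hji : β' j ≤ β i) :
    symmSum x β ≤ symmSum x β' := by
  have hi : β' i = β i + 1 := by simpa [hij, hij.symm] using congrFun htransfer i
  have hj : β j = β' j + 1 := by simpa [hij, hij.symm] using (congrFun htransfer j).symm
  have hrest : ∀ k ∈ ({i, j}ᶜ : Finset ι), β' k = β k := fun k hk => by
    simp only [mem_compl, mem_insert, mem_singleton, not_or] at hk
    simpa [hk.1, hk.2] using congrFun htransfer k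
  refine Fintype.sum_le_sum_of_add_comp_le (Equiv.mulRight (Equiv.swap i j)) fun σ => ?_
  have hswap : ∀ k ∈ ({i, j}ᶜ : Finset ι), (σ * Equiv.swap i j) k = σ k := fun k hk => by
    simp only [mem_compl, mem_insert, mem_singleton, not_or] at hk
    simp [Equiv.swap_apply_of_ne_of_ne hk.1 hk.2]
  set c := ∏ k ∈ {i, j}ᶜ, x (σ k) ^ β k
  have hc : 0 ≤ c := prod_nonneg fun k _ => pow_nonneg (hx _) _
  have hprod : ∀ (γ : ι → ℕ) (τ : Equiv.Perm ι), (∀ k ∈ ({i, j}ᶜ : Finset ι),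
      x (τ k) ^ γ k = x (σ k) ^ β k) → ∏ k, x (τ k) ^ γ k = x (τ i) ^ γ i * x (τ j) ^ γ j * c :=
    fun γ τ h => by rw [Fintype.prod_eq_mul_mul_prod_compl_pair hij, prod_congr rfl h]
  rw [Equiv.coe_mulRight, hprod β σ fun _ _ => rfl, hprod β' σ fun k hk => by rw [hrest k hk],
    hprod β (σ * _) fun k hk => by rw [hswap k hk],
    hprod β' (σ * _) fun k hk => by rw [hswap k hk, hrest k hk]]
  simp only [Equiv.Perm.mul_apply, Equiv.swap_apply_left, Equiv.swap_apply_right, hi, hj]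
  have := mul_le_mul_of_nonneg_right (pow_mul_pow_add_pow_mul_pow_le (hx (σ i)) (hx (σ j)) hji) hc
  linarith

end OrderedRing

theorem Antitone.of_transfer {ι : Type*} [LinearOrder ι] {β β' : ι → ℕ} (hβ : Antitone β)
    {i j : ι} (hij : i < j) (htransfer : β' + Pi.single j 1 = β + Pi.single i 1)
    (hi : ∀ k < i, β i < β k) (hj : ∀ k, j < k → β k < β j) : Antitone β' := by
  intro a b hab
  have ha := congrFun htransfer a
  have hb := congrFun htransfer b
  simp only [Pi.add_apply, Pi.single_apply] at ha hb
  have hba := hβ hab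
  rcases eq_or_lt_of_le hab with rfl | hlt
  · rfl
  by_cases hbi : b = i
  · subst hbi
    have := hi a hlt
    simp only [hlt.ne, (hlt.trans hij).ne, hij.ne, if_false, if_true] at ha hb
    omega
  by_cases haj : a = j
  · subst haj
    have := hj b hlt
    simp only [hij.ne', (hij.trans hlt).ne', hlt.ne', if_false, if_true] at ha hb
    omega
  simp only [hbi, haj, if_false] at ha hb
  split_ifs at ha hb <;> omega

section Dominance

variable {n : ℕ}

def partialSum (γ : Fin n → ℕ) (k : ℕ) : ℕ :=
  ∑ i ∈ univ.filter (fun i : Fin n => (i : ℕ) < k), γ i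

theorem partialSum_zero (γ : Fin n → ℕ) : partialSum γ 0 = 0 := by
  simp [partialSum]

theorem partialSum_succ (γ : Fin n → ℕ) (i : Fin n) :
    partialSum γ (i + 1) = partialSum γ i + γ i := by
  have : univ.filter (fun k : Fin n => (k : ℕ) < i + 1) =
      insert i (univ.filter (fun k : Fin n => (k : ℕ) < i)) := by
    ext k
    simp [le_iff_eq_or_lt, Fin.val_inj]
  rw [partialSum, this, sum_insert (by simp), add_comm, partialSum]

theorem partialSum_of_le (γ : Fin n → ℕ) {k : ℕ} (hk : n ≤ k) : partialSum γ k = ∑ i, γ i := by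
  rw [partialSum, filter_true_of_mem fun i _ => i.isLt.trans_le hk]

theorem partialSum_add (γ δ : Fin n → ℕ) (k : ℕ) :
    partialSum (γ + δ) k = partialSum γ k + partialSum δ k :=
  sum_add_distrib

theorem partialSum_single (i : Fin n) (k : ℕ) :
    partialSum (Pi.single i 1) k = if (i : ℕ) < k then 1 else 0 := by
  simp [partialSum, sum_pi_single']

variable {α β : Fin n → ℕ}

theorem exists_transfer_indices (hdom : ∀ k, partialSum β k ≤ partialSum α k)
    (hsum : ∑ i, β i = ∑ i, α i) (hne : β ≠ α) :
    ∃ i j : Fin n, i < j ∧ (∀ k ≤ (i : ℕ), partialSum β k = partialSum α k) ∧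
      (∀ k, (i : ℕ) < k → k ≤ j → partialSum β k < partialSum α k) ∧
      partialSum β (j + 1) = partialSum α (j + 1) := by
  classical
  have hstrict : ∃ k, partialSum β (k + 1) < partialSum α (k + 1) := by
    by_contra! hall
    have heq : ∀ k, partialSum β k = partialSum α k
      | 0 => by rw [partialSum_zero, partialSum_zero]
      | k + 1 => (hdom _).antisymm (hall k)
    refine hne (funext fun k => ?_)
    have := heq (k + 1)
    rw [partialSum_succ, partialSum_succ, heq k] at this
    omega
  set i := Nat.find hstrict
  have hbefore : ∀ k ≤ i, partialSum β k = partialSum α k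
    | 0, _ => by rw [partialSum_zero, partialSum_zero]
    | k + 1, hk => (hdom _).antisymm (not_lt.1 (Nat.find_min hstrict hk))
  have hin : i < n := by
    by_contra! hni
    have := Nat.find_spec hstrict
    rw [partialSum_of_le _ (by omega), partialSum_of_le _ (by omega), hsum] at this
    exact this.false
  have hclose : ∃ k, i < k ∧ partialSum β (k + 1) = partialSum α (k + 1) :=
    ⟨max (i + 1) n, by omega, by
      rw [partialSum_of_le _ (by omega), partialSum_of_le _ (by omega), hsum]⟩
  set j := Nat.find hclose
  have hgap : ∀ k, i < k → k ≤ j → partialSum β k < partialSum α k := by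
    rintro (_ | m) hik hkj
    · omega
    rcases (Nat.lt_succ_iff.1 hik).eq_or_lt with rfl | him
    · exact Nat.find_spec hstrict
    · exact (hdom _).lt_of_ne fun h => Nat.find_min hclose (by omega) ⟨him, h⟩
  have hjn : j < n := by
    by_contra! hnj
    have := hgap n hin hnj
    rw [partialSum_of_le _ le_rfl, partialSum_of_le _ le_rfl, hsum] at this
    exact this.false
  exact ⟨⟨i, hin⟩, ⟨j, hjn⟩, (Nat.find_spec hclose).1, hbefore, hgap, (Nat.find_spec hclose).2⟩

theorem exists_transfer_of_dominated (hα : Antitone α) (hβ : Antitone β)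
    (hdom : ∀ k, partialSum β k ≤ partialSum α k) (hsum : ∑ i, β i = ∑ i, α i) (hne : β ≠ α) :
    ∃ (i j : Fin n) (β' : Fin n → ℕ), i < j ∧ β' + Pi.single j 1 = β + Pi.single i 1 ∧
      β' j ≤ β i ∧ Antitone β' ∧ ∀ k, partialSum β' k ≤ partialSum α k := by
  obtain ⟨i, j, hij, hbefore, hgap, hafter⟩ := exists_transfer_indices hdom hsum hne
  have hβi : β i < α i := by
    have := hgap (i + 1) (by omega) (by simpa [Nat.succ_le_iff] using hij)
    rwa [partialSum_succ, partialSum_succ, hbefore i le_rfl, add_lt_add_iff_left] at this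
  have hαj : α j < β j := by
    have := hgap j hij le_rfl
    rw [partialSum_succ, partialSum_succ] at hafter
    omega
  have hβ_before : ∀ k < i, β i < β k := fun k hki => by
    have hk := hbefore (k + 1) hki
    rw [partialSum_succ, partialSum_succ, hbefore k (by omega)] at hk
    have := hα hki.le
    omega
  have hβ_after : ∀ k, j < k → β k < β j := fun k hjk => by
    set j' : Fin n := ⟨j + 1, by omega⟩
    have hj' := hdom (j' + 1)
    rw [partialSum_succ β j', partialSum_succ α j', show (j' : ℕ) = j + 1 from rfl, hafter] at hj'
    have := hβ (show j' ≤ k from hjk)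
    have := hα (show j ≤ j' from Nat.le_succ _)
    omega
  set β' := β + Pi.single i 1 - Pi.single j 1
  have htransfer : β' + Pi.single j 1 = β + Pi.single i 1 := by
    funext k
    rcases eq_or_ne k j with rfl | hkj
    · simp only [β', Pi.add_apply, Pi.sub_apply, Pi.single_eq_same, Pi.single_eq_of_ne hij.ne']
      omega
    · simp [β', hkj]
  refine ⟨i, j, β', hij, htransfer, ?_, hβ.of_transfer hij htransfer hβ_before hβ_after,
    fun k => ?_⟩
  · have hj := congrFun htransfer j
    simp only [Pi.add_apply, Pi.single_eq_same, Pi.single_eq_of_ne hij.ne'] at hj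
    have := hβ hij.le
    omega
  · have hk := congrArg (partialSum · k) htransfer
    simp only [partialSum_add, partialSum_single] at hk
    have := hdom k
    by_cases hwindow : (i : ℕ) < k ∧ k ≤ j
    · have := hgap k hwindow.1 hwindow.2
      split_ifs at hk <;> omega
    · split_ifs at hk <;> omega

end Dominance

theorem symmSum_le_symmSum_of_dominated {R : Type*} [CommRing R] [LinearOrder R]
    [IsStrictOrderedRing R] {n : ℕ} {x : Fin n → R} (hx : ∀ k, 0 ≤ x k) {α β : Fin n → ℕ}
    (hα : Antitone α) (hβ : Antitone β) (hdom : ∀ k, partialSum β k ≤ partialSum α k)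
    (hsum : ∑ i, β i = ∑ i, α i) : symmSum x β ≤ symmSum x α := by
  induction hm : ∑ k : Fin n, (k : ℕ) * β k using Nat.strong_induction_on generalizing β with
  | _ m ih =>
  by_cases hne : β = α
  · rw [hne]
  obtain ⟨i, j, β', hij, htransfer, hji, hβ', hdom'⟩ :=
    exists_transfer_of_dominated hα hβ hdom hsum hne
  have hsum' : ∑ k, β' k = ∑ k, α k := by
    have := congrArg (fun γ : Fin n → ℕ => ∑ k, γ k) htransfer
    simp only [Pi.add_apply, sum_add_distrib, sum_pi_single', mem_univ, if_true] at this
    omega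
  have hm' : ∑ k : Fin n, (k : ℕ) * β' k < m := by
    have := congrArg (fun γ : Fin n → ℕ => ∑ k : Fin n, (k : ℕ) * γ k) htransfer
    simp only [Pi.add_apply, mul_add, sum_add_distrib, Pi.single_apply, mul_ite, mul_one, mul_zero,
      sum_ite_eq', mem_univ, if_true] at this
    have : (i : ℕ) < j := hij
    omega
  calc symmSum x β ≤ symmSum x β' := symmSum_le_symmSum_of_transfer hx hij.ne htransfer hji
    _ ≤ symmSum x α := ih _ hm' hβ' hdom' hsum' rfl

theorem muirhead (n d : ℕ) (α β : Fin n → ℕ)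
    (hα : ∀ i j : Fin n, i ≤ j → α j ≤ α i) (hβ : ∀ i j : Fin n, i ≤ j → β j ≤ β i)
    (hαd : ∑ i, α i = d) (hβd : ∑ i, β i = d)
    (hdom : ∀ k : ℕ, ∑ i ∈ univ.filter (fun i : Fin n => (i : ℕ) < k), β i ≤
      ∑ i ∈ univ.filter (fun i : Fin n => (i : ℕ) < k), α i)
    (x : Fin n → ℝ) (hx : ∀ i, 0 ≤ x i) :
    ((n.factorial : ℝ))⁻¹ * ∑ σ : Equiv.Perm (Fin n), ∏ j, x (σ j) ^ β j ≤
    ((n.factorial : ℝ))⁻¹ * ∑ σ : Equiv.Perm (Fin n), ∏ j, x (σ j) ^ α j :=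
  mul_le_mul_of_nonneg_left
    (symmSum_le_symmSum_of_dominated hx (fun _ _ => hα _ _) (fun _ _ => hβ _ _) hdom
      (hβd.trans hαd.symm))
    (by positivity)
end

section
/- For 1 ≤ i ≤ k, the polynomial P_{i−1}·P_{k+1} − P_i·P_k equals ((n−1)/n)·([k+1, i−1, 0,…,0] − [k, i, 0,…,0]), and hence lies in S (its substitution x_j ↦ x_j² is a sum of squares). -/
open Finset MvPolynomial

/-- The normalized `m`-th power sum `P_m = (1/n) Σ_j x_j^m`. -/
noncomputable def psum (n : ℕ) (m : ℕ) : MvPolynomial (Fin n) ℝ :=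
  ((n : ℝ))⁻¹ • ∑ j, X j ^ m

/-- The normalized monomial symmetric polynomial `[α]`. -/
noncomputable def msym (n : ℕ) (α : Fin n → ℕ) : MvPolynomial (Fin n) ℝ :=
  ((n.factorial : ℝ))⁻¹ • ∑ σ : Equiv.Perm (Fin n), ∏ j, X (σ j) ^ α j

/-! With `p_m = Σ_j x_j^m`, so that `P_m = p_m / n`, summing over permutations gives
`n(n-1)·[a, b] = p_a p_b - p_{a+b}`; the terms `p_{k+i}` cancel in `[k+1, i-1] - [k, i]`.
For the sum of squares, pairing the terms `(j, l)` and `(l, j)` of the double sum gives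
`2(p_{i-1} p_{k+1} - p_i p_k) = Σ_{j,l} (y_j y_l)^{i-1} (y_l - y_j)(y_l^e - y_j^e)` with
`e = k - i + 1`, and for `y = x²` each factor
`(y_l - y_j)(y_l^e - y_j^e) = (y_l - y_j)² Σ_{r<e} y_l^r y_j^{e-1-r}` is a sum of squares. -/

theorem Fin.sum_perm_apply_zero {M : Type*} [AddCommMonoid M] (m : ℕ) (f : Fin (m + 1) → M) :
    ∑ σ : Equiv.Perm (Fin (m + 1)), f (σ 0) = m.factorial • ∑ j, f j := by
  rw [← Equiv.sum_comp Equiv.Perm.decomposeFin.symm, Fintype.sum_prod_type, smul_sum]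
  simp only [Equiv.Perm.decomposeFin_symm_apply_zero, Finset.sum_const, Finset.card_univ,
    Fintype.card_perm, Fintype.card_fin]

theorem Fin.sum_perm_apply_zero_apply_one {M : Type*} [AddCommGroup M] (m : ℕ)
    (f : Fin (m + 2) → Fin (m + 2) → M) :
    ∑ σ : Equiv.Perm (Fin (m + 2)), f (σ 0) (σ 1) =
      m.factorial • ∑ j, (∑ l, f j l - f j j) := by
  rw [← Equiv.sum_comp Equiv.Perm.decomposeFin.symm, Fintype.sum_prod_type, smul_sum]
  refine sum_congr rfl fun j _ => ?_
  simp only [Equiv.Perm.decomposeFin_symm_apply_zero, Equiv.Perm.decomposeFin_symm_apply_one]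
  rw [Fin.sum_perm_apply_zero m fun q => f j (Equiv.swap 0 j q.succ)]
  congr 1
  have h := Fin.sum_univ_succ fun l => f j (Equiv.swap 0 j l)
  rw [Equiv.sum_comp (Equiv.swap 0 j) (f j), Equiv.swap_apply_left] at h
  rw [h, add_sub_cancel_left]

theorem Fin.prod_pow_ite_zero_one {M : Type*} [CommMonoid M] (m a b : ℕ)
    (f : Fin (m + 2) → M) :
    ∏ j, f j ^ (if (j : ℕ) = 0 then a else if (j : ℕ) = 1 then b else 0) =
      f 0 ^ a * f 1 ^ b := by
  simp [Fin.prod_univ_succ, Fin.val_succ, Fin.succ_zero_eq_one]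

theorem natCast_mul_sub_one_smul_msym (n a b : ℕ) :
    ((n : ℝ) * (n - 1)) •
        msym n (fun t => if (t : ℕ) = 0 then a else if (t : ℕ) = 1 then b else 0) =
      MvPolynomial.psum (Fin n) ℝ a * MvPolynomial.psum (Fin n) ℝ b -
        MvPolynomial.psum (Fin n) ℝ (a + b) := by
  match n with
  | 0 => simp [MvPolynomial.psum]
  | 1 => simp [MvPolynomial.psum, pow_add]
  | m + 2 =>
    rw [msym, smul_smul,
      sum_congr rfl fun σ _ => Fin.prod_pow_ite_zero_one m a b fun j => X (σ j),
      Fin.sum_perm_apply_zero_apply_one m fun j l => X j ^ a * X l ^ b,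
      ← Nat.cast_smul_eq_nsmul ℝ, smul_smul]
    have hcoeff :
        ((m + 2 : ℕ) * ((m + 2 : ℕ) - 1) * ((m + 2).factorial : ℝ)⁻¹) * m.factorial = 1 := by
      rw [Nat.factorial_succ, Nat.factorial_succ]
      push_cast
      field_simp
      ring
    simp only [hcoeff, one_smul, sum_sub_distrib, MvPolynomial.psum, sum_mul_sum, pow_add]

theorem natCast_mul_sub_one_smul_msym_sub_msym (n a e : ℕ) :
    ((n : ℝ) * (n - 1)) •
        ((msym n fun t => if (t : ℕ) = 0 then a + e + 1 else if (t : ℕ) = 1 then a else 0) -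
          msym n fun t => if (t : ℕ) = 0 then a + e else if (t : ℕ) = 1 then a + 1 else 0) =
      MvPolynomial.psum (Fin n) ℝ a * MvPolynomial.psum (Fin n) ℝ (a + e + 1) -
        MvPolynomial.psum (Fin n) ℝ (a + 1) * MvPolynomial.psum (Fin n) ℝ (a + e) := by
  rw [smul_sub, natCast_mul_sub_one_smul_msym, natCast_mul_sub_one_smul_msym,
    show a + e + 1 + a = a + e + (a + 1) by omega]
  ring

theorem psum_mul_psum (n a b : ℕ) :
    psum n a * psum n b =
      ((n : ℝ)⁻¹ ^ 2) • (MvPolynomial.psum (Fin n) ℝ a * MvPolynomial.psum (Fin n) ℝ b) := by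
  rw [_root_.psum, _root_.psum, smul_mul_smul_comm, sq]
  rfl

theorem isSumSq_sq_sub_sq_mul_pow_sub_pow {R : Type*} [CommRing R] (s t : R) (e : ℕ) :
    IsSumSq ((t ^ 2 - s ^ 2) * ((t ^ 2) ^ e - (s ^ 2) ^ e)) := by
  have h : (t ^ 2 - s ^ 2) * ((t ^ 2) ^ e - (s ^ 2) ^ e) =
      ∑ r ∈ range e, ((t ^ 2 - s ^ 2) * t ^ r * s ^ (e - 1 - r)) ^ 2 := by
    rw [← geom_sum₂_mul (t ^ 2) (s ^ 2) e, sum_mul, mul_sum]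
    exact sum_congr rfl fun r _ => by ring
  rw [h]
  exact IsSumSq.sum_sq _ _

theorem two_mul_sum_pow_mul_sum_pow_sub {ι R : Type*} [Fintype ι] [CommRing R] (y : ι → R)
    (a e : ℕ) :
    2 * ((∑ j, y j ^ a) * (∑ j, y j ^ (a + e + 1)) -
        (∑ j, y j ^ (a + 1)) * (∑ j, y j ^ (a + e))) =
      ∑ j, ∑ l, (y j * y l) ^ a * ((y l - y j) * (y l ^ e - y j ^ e)) := by
  have h : (∑ j, y j ^ a) * (∑ j, y j ^ (a + e + 1)) -
        (∑ j, y j ^ (a + 1)) * (∑ j, y j ^ (a + e)) =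
      ∑ j, ∑ l, (y j ^ a * y l ^ (a + e + 1) - y j ^ (a + 1) * y l ^ (a + e)) := by
    simp only [sum_mul_sum, ← sum_sub_distrib]
  rw [h, two_mul]
  nth_rewrite 2 [sum_comm]
  rw [← sum_add_distrib]
  refine sum_congr rfl fun j _ => ?_
  rw [← sum_add_distrib]
  exact sum_congr rfl fun l _ => by ring

theorem isSumSq_two_mul_sum_sq_pow_mul_sum_sq_pow_sub {ι R : Type*} [Fintype ι] [CommRing R]
    (x : ι → R) (a e : ℕ) :
    IsSumSq (2 * ((∑ j, (x j ^ 2) ^ a) * (∑ j, (x j ^ 2) ^ (a + e + 1)) -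
      (∑ j, (x j ^ 2) ^ (a + 1)) * (∑ j, (x j ^ 2) ^ (a + e)))) := by
  rw [two_mul_sum_pow_mul_sum_pow_sub]
  refine IsSumSq.sum fun j _ => IsSumSq.sum fun l _ => IsSumSq.mul ?_ ?_
  · rw [show (x j ^ 2 * x l ^ 2) ^ a = (x j * x l) ^ a * (x j * x l) ^ a by ring]
    exact IsSumSq.mul_self _
  · exact isSumSq_sq_sub_sq_mul_pow_sub_pow (x j) (x l) e

theorem IsSumSq.smul_of_nonneg {A : Type*} [CommSemiring A] [Algebra ℝ A] {s : A}
    (hs : IsSumSq s) {c : ℝ} (hc : 0 ≤ c) : IsSumSq (c • s) := by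
  rw [Algebra.smul_def, ← Real.mul_self_sqrt hc, map_mul]
  exact (IsSumSq.mul_self _).mul hs

theorem IsSumSq.of_two_mul {A : Type*} [CommSemiring A] [Algebra ℝ A] {s : A}
    (hs : IsSumSq (2 * s)) : IsSumSq s := by
  have h : (2⁻¹ : ℝ) • (2 * s) = s := by
    rw [two_mul, ← two_smul ℝ s, smul_smul, inv_mul_cancel₀ two_ne_zero, one_smul]
  exact h ▸ hs.smul_of_nonneg (by norm_num)

theorem bind₁_X_sq_psum {σ R : Type*} [Fintype σ] [CommSemiring R] (m : ℕ) :
    bind₁ (fun j : σ => (X j : MvPolynomial σ R) ^ 2) (MvPolynomial.psum σ R m) =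
      ∑ j, (X j ^ 2) ^ m := by
  simp [MvPolynomial.psum]

theorem psum_newton_identity_and_sos_general (n i k : ℕ) (hi : 1 ≤ i) (hik : i ≤ k) :
    psum n (i - 1) * psum n (k + 1) - psum n i * psum n k =
      (((n : ℝ) - 1) / n) •
        (msym n (fun t => if (t : ℕ) = 0 then k + 1 else if (t : ℕ) = 1 then i - 1 else 0) -
         msym n (fun t => if (t : ℕ) = 0 then k else if (t : ℕ) = 1 then i else 0)) ∧
    IsSumSq (bind₁ (fun j : Fin n => (X j : MvPolynomial (Fin n) ℝ) ^ 2)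
      (psum n (i - 1) * psum n (k + 1) - psum n i * psum n k)) := by
  obtain ⟨a, rfl⟩ : ∃ a, i = a + 1 := ⟨i - 1, by omega⟩
  obtain ⟨e, rfl⟩ : ∃ e, k = a + e := ⟨k - a, by omega⟩
  rw [Nat.add_sub_cancel, psum_mul_psum, psum_mul_psum, ← smul_sub]
  constructor
  · rw [← natCast_mul_sub_one_smul_msym_sub_msym, smul_smul]
    congr 1
    rcases eq_or_ne (n : ℝ) 0 with hn | hn
    · simp [hn]
    · field_simp
  · rw [map_smul]
    refine IsSumSq.smul_of_nonneg (IsSumSq.of_two_mul ?_) (by positivity)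
    simp only [map_sub, map_mul, bind₁_X_sq_psum]
    exact isSumSq_two_mul_sum_sq_pow_mul_sum_sq_pow_sub X a e

theorem psum_newton_identity_and_sos (n i k : ℕ) (hn : 2 ≤ n) (hi : 1 ≤ i) (hik : i ≤ k) :
    psum n (i - 1) * psum n (k + 1) - psum n i * psum n k =
      (((n : ℝ) - 1) / n) •
        (msym n (fun t => if (t : ℕ) = 0 then k + 1 else if (t : ℕ) = 1 then i - 1 else 0) -
         msym n (fun t => if (t : ℕ) = 0 then k else if (t : ℕ) = 1 then i else 0)) ∧
    IsSumSq (bind₁ (fun j : Fin n => (X j : MvPolynomial (Fin n) ℝ) ^ 2)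
      (psum n (i - 1) * psum n (k + 1) - psum n i * psum n k)) :=
  psum_newton_identity_and_sos_general n i k hi hik
end

section
/- For all nonnegative reals x₁,…,xₙ and 1 ≤ i ≤ k, one has P_{i−1}(x)·P_{k+1}(x) ≥ P_i(x)·P_k(x), where P_m = (1/n) Σ_j x_j^m. -/
/-!
Expanding both products and symmetrizing in the summation indices, it suffices to compare the
paired terms: for `a, b ≥ 0` and `s ≤ t`, `a^(s+1) b^t + b^(s+1) a^t ≤ a^s b^(t+1) + b^s a^(t+1)`.
After factoring out `(ab)^s` this is the binary rearrangement inequality for the similarly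
ordered pairs `(a, b)` and `(a^m, b^m)`.
-/

open Finset

theorem mul_pow_add_mul_pow_le_pow_succ_add_pow_succ {R : Type*} [Semiring R] [LinearOrder R]
    [IsStrictOrderedRing R] [ExistsAddOfLE R] {a b : R} (ha : 0 ≤ a) (hb : 0 ≤ b) (m : ℕ) :
    a * b ^ m + b * a ^ m ≤ a ^ (m + 1) + b ^ (m + 1) := by
  rw [pow_succ', pow_succ']
  rcases le_total a b with hab | hba
  · exact mul_add_mul_le_mul_add_mul hab (pow_le_pow_left₀ ha hab m)
  · exact mul_add_mul_le_mul_add_mul' hba (pow_le_pow_left₀ hb hba m)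

theorem pow_succ_mul_pow_add_pow_succ_mul_pow_le {R : Type*} [CommSemiring R] [LinearOrder R]
    [IsStrictOrderedRing R] [ExistsAddOfLE R] {a b : R} (ha : 0 ≤ a) (hb : 0 ≤ b) {s t : ℕ}
    (hst : s ≤ t) :
    a ^ (s + 1) * b ^ t + b ^ (s + 1) * a ^ t ≤ a ^ s * b ^ (t + 1) + b ^ s * a ^ (t + 1) := by
  obtain ⟨m, rfl⟩ := Nat.exists_eq_add_of_le hst
  calc a ^ (s + 1) * b ^ (s + m) + b ^ (s + 1) * a ^ (s + m)
      = (a * b) ^ s * (a * b ^ m + b * a ^ m) := by ring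
    _ ≤ (a * b) ^ s * (a ^ (m + 1) + b ^ (m + 1)) :=
      mul_le_mul_of_nonneg_left (mul_pow_add_mul_pow_le_pow_succ_add_pow_succ ha hb m)
        (by positivity)
    _ = a ^ s * b ^ (s + m + 1) + b ^ s * a ^ (s + m + 1) := by ring

theorem Finset.sum_mul_sum_le_sum_mul_sum_of_symm {ι R : Type*} [CommSemiring R] [LinearOrder R]
    [IsStrictOrderedRing R] {s : Finset ι} {f g u v : ι → R}
    (h : ∀ p ∈ s, ∀ q ∈ s, f p * g q + f q * g p ≤ u p * v q + u q * v p) :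
    (∑ p ∈ s, f p) * (∑ q ∈ s, g q) ≤ (∑ p ∈ s, u p) * (∑ q ∈ s, v q) := by
  have two_mul_eq (f g : ι → R) : 2 * ((∑ p ∈ s, f p) * (∑ q ∈ s, g q)) =
      ∑ p ∈ s, ∑ q ∈ s, (f p * g q + f q * g p) := by
    simp only [sum_add_distrib, two_mul, sum_mul_sum]
    rw [sum_comm (f := fun p q => f q * g p)]
  refine le_of_mul_le_mul_left ?_ (zero_lt_two' R)
  rw [two_mul_eq, two_mul_eq]
  exact sum_le_sum fun p hp => sum_le_sum fun q hq => h p hp q hq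

theorem psum_products_monotone (n i k : ℕ) (hi : 1 ≤ i) (hik : i ≤ k)
    (x : Fin n → ℝ) (hx : ∀ j, 0 ≤ x j) :
    ((n : ℝ))⁻¹ * (∑ j, x j ^ i) * (((n : ℝ))⁻¹ * ∑ j, x j ^ k) ≤
    ((n : ℝ))⁻¹ * (∑ j, x j ^ (i - 1)) * (((n : ℝ))⁻¹ * ∑ j, x j ^ (k + 1)) := by
  obtain ⟨s, rfl⟩ := Nat.exists_eq_add_of_le' hi
  rw [Nat.add_sub_cancel, mul_mul_mul_comm, mul_mul_mul_comm _ (∑ j, x j ^ s)]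
  refine mul_le_mul_of_nonneg_left ?_ (by positivity)
  exact sum_mul_sum_le_sum_mul_sum_of_symm fun p _ q _ =>
    pow_succ_mul_pow_add_pow_succ_mul_pow_le (hx p) (hx q) (Nat.le_of_succ_le hik)
end

section
/- For all nonnegative reals x₁,…,xₙ and 1 ≤ i ≤ k ≤ n−1, one has E_i(x)·E_k(x) ≥ E_{i−1}(x)·E_{k+1}(x), where E_m is the normalized m-th elementary symmetric function (generalized Newton inequality). -/
/-!
Induction on `n`. Splitting off `t = x 0`, the normalized means satisfy
`(n + 1) E_{n+1}(j) = (n + 1 - j) E_n(j) + j t E_n(j - 1)`. After this substitution,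
`(n + 1)² (E_{p+1} E_q - E_p E_{q+1})` becomes a combination, with nonnegative coefficients,
of four instances of the inequality for `n` variables and of a quadratic in `t` whose
discriminant is nonpositive by one of them. Indexing by `ℤ`, with `E` extended by zero to negative
indices, makes the recurrence hold at every index and removes all boundary cases.
-/

open Finset

/-- The normalized `m`-th elementary symmetric function of `x`. -/
noncomputable def E (n : ℕ) (m : ℕ) (x : Fin n → ℝ) : ℝ :=
  ((n.choose m : ℝ))⁻¹ * ∑ s ∈ powersetCard m (univ : Finset (Fin n)), ∏ i ∈ s, x i

theorem Multiset.esymm_cons_succ {R : Type*} [CommSemiring R] (a : R) (s : Multiset R) (j : ℕ) :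
    (a ::ₘ s).esymm (j + 1) = s.esymm (j + 1) + a * s.esymm j := by
  simp [Multiset.esymm, Multiset.powersetCard_cons, Multiset.map_map, Multiset.sum_map_mul_left]

theorem E_eq_esymm (n m : ℕ) (x : Fin n → ℝ) :
    E n m x = (n.choose m : ℝ)⁻¹ * (univ.val.map x).esymm m := by
  rw [E, Finset.esymm_map_val]

theorem Fin.univ_val_map_succ {α : Type*} (n : ℕ) (x : Fin (n + 1) → α) :
    (univ : Finset (Fin (n + 1))).val.map x = x 0 ::ₘ univ.val.map (Fin.tail x) := by
  rw [Fin.univ_val_map, Fin.univ_val_map, List.ofFn_succ]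
  rfl

theorem E_of_lt {n m : ℕ} (h : n < m) (x : Fin n → ℝ) : E n m x = 0 := by
  simp [E, Nat.choose_eq_zero_of_lt h]

theorem E_zero (n : ℕ) (x : Fin n → ℝ) : E n 0 x = 1 := by
  simp [E]

theorem E_nonneg {n : ℕ} (m : ℕ) {x : Fin n → ℝ} (hx : 0 ≤ x) : 0 ≤ E n m x :=
  mul_nonneg (by positivity) (sum_nonneg fun _ _ => prod_nonneg fun i _ => hx i)

theorem succ_mul_E_succ_succ (n j : ℕ) (x : Fin (n + 1) → ℝ) :
    (n + 1 : ℝ) * E (n + 1) (j + 1) x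
      = (n - j) * E n (j + 1) (Fin.tail x) + (j + 1) * x 0 * E n j (Fin.tail x) := by
  rcases lt_trichotomy j n with hjn | rfl | hnj
  · simp only [E_eq_esymm, Fin.univ_val_map_succ, Multiset.esymm_cons_succ]
    have h₀ : ((n + 1) * n.choose j : ℝ) = (n + 1).choose (j + 1) * (j + 1) := by
      exact_mod_cast Nat.add_one_mul_choose_eq n j
    have h₁ : (n.choose (j + 1) * (n + 1) : ℝ) = (n + 1).choose (j + 1) * (n - j) := by
      have h := Nat.choose_mul_succ_eq n (j + 1)
      rw [Nat.add_sub_add_right] at h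
      rw [← Nat.cast_sub hjn.le]
      exact_mod_cast h
    have : (n.choose j : ℝ) ≠ 0 := by exact_mod_cast (Nat.choose_pos hjn.le).ne'
    have : (n.choose (j + 1) : ℝ) ≠ 0 := by exact_mod_cast (Nat.choose_pos hjn).ne'
    have : ((n + 1).choose (j + 1) : ℝ) ≠ 0 := by exact_mod_cast (Nat.choose_pos (by omega)).ne'
    have k₀ : (n + 1 : ℝ) * ((n + 1).choose (j + 1) : ℝ)⁻¹ = (j + 1) * (n.choose j : ℝ)⁻¹ := by
      field_simp
      linear_combination h₀
    have k₁ : (n + 1 : ℝ) * ((n + 1).choose (j + 1) : ℝ)⁻¹ = (n - j) * (n.choose (j + 1) : ℝ)⁻¹ := by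
      field_simp
      linear_combination h₁
    linear_combination (univ.val.map (Fin.tail x)).esymm (j + 1) * k₁
      + x 0 * (univ.val.map (Fin.tail x)).esymm j * k₀
  · have h : (univ.val.map (Fin.tail x)).esymm (j + 1) = 0 := by
      rw [Multiset.esymm, Multiset.powersetCard_eq_empty _ (by simp)]
      simp
    rw [E_of_lt (Nat.lt_succ_self j), E_eq_esymm, E_eq_esymm, Fin.univ_val_map_succ,
      Multiset.esymm_cons_succ, h]
    simp only [Nat.choose_self, Nat.cast_one, inv_one]
    ring
  · simp [E_of_lt hnj, E_of_lt (Nat.lt_succ_of_lt hnj), E_of_lt (by omega : n + 1 < j + 1)]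

noncomputable def Eseq (n : ℕ) (x : Fin n → ℝ) : ℤ → ℝ
  | (m : ℕ) => E n m x
  | Int.negSucc _ => 0

theorem succ_mul_Eseq (n : ℕ) (x : Fin (n + 1) → ℝ) (j : ℤ) :
    (n + 1 : ℝ) * Eseq (n + 1) x j
      = (n + 1 - j) * Eseq n (Fin.tail x) j + j * x 0 * Eseq n (Fin.tail x) (j - 1) := by
  rcases j with (_ | m) | m
  · simp [Eseq, E_zero]
  · have h : ((m + 1 : ℕ) : ℤ) - 1 = m := by simp
    rw [Int.ofNat_eq_natCast, h]
    simp only [Eseq, succ_mul_E_succ_succ]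
    push_cast
    ring
  · simp [Eseq, Int.negSucc_sub_one]

theorem Eseq_of_neg {n : ℕ} (x : Fin n → ℝ) {j : ℤ} (hj : j < 0) : Eseq n x j = 0 := by
  rcases j with m | m
  · exact absurd hj (by simp)
  · rfl

theorem Eseq_of_gt {n : ℕ} (x : Fin n → ℝ) {j : ℤ} (hj : n < j) : Eseq n x j = 0 := by
  lift j to ℕ using by omega
  exact E_of_lt (by omega) x

theorem Eseq_nonneg {n : ℕ} {x : Fin n → ℝ} (hx : 0 ≤ x) (j : ℤ) : 0 ≤ Eseq n x j := by
  rcases j with m | m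
  · exact E_nonneg m hx
  · exact le_rfl

theorem quadratic_nonneg_of_sq_le {α β γ : ℝ} (hα : 0 ≤ α) (hγ : 0 ≤ γ) (h : β ^ 2 ≤ α * γ)
    (t : ℝ) : 0 ≤ γ - 2 * β * t + α * t ^ 2 := by
  rcases hα.eq_or_lt with rfl | hα
  · obtain rfl : β = 0 := by nlinarith
    simpa using hγ
  · have : 0 ≤ α * (γ - 2 * β * t + α * t ^ 2) := by nlinarith [sq_nonneg (α * t - β)]
    exact nonneg_of_mul_nonneg_right this hα

/-- `a (j + 1) / a j` is antitone, written without division so that zero terms are allowed. -/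
def RatioAntitone (a : ℤ → ℝ) : Prop :=
  ∀ p q, p ≤ q → a p * a (q + 1) ≤ a (p + 1) * a q

theorem RatioAntitone.of_interior {b : ℤ → ℝ} (N : ℕ) (hb : ∀ j, 0 ≤ b j)
    (hneg : ∀ j < 0, b j = 0) (hgt : ∀ j : ℤ, N < j → b j = 0)
    (h : ∀ p q : ℤ, 0 ≤ p → p < q → q + 1 ≤ N → b p * b (q + 1) ≤ b (p + 1) * b q) :
    RatioAntitone b := by
  intro p q hpq
  rcases lt_or_ge p 0 with hp | hp
  · rw [hneg p hp, zero_mul]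
    exact mul_nonneg (hb _) (hb _)
  rcases lt_or_ge (N : ℤ) (q + 1) with hq | hq
  · rw [hgt _ hq, mul_zero]
    exact mul_nonneg (hb _) (hb _)
  rcases hpq.eq_or_lt with rfl | hpq
  · rw [mul_comm]
  exact h p q hp hpq hq

theorem RatioAntitone.of_recurrence {a b : ℤ → ℝ} {N t : ℝ} (ha : RatioAntitone a)
    (ha₀ : ∀ j, 0 ≤ a j) (ht : 0 ≤ t) (hb : ∀ j : ℤ, N * b j = (N - j) * a j + j * t * a (j - 1))
    {p q : ℤ} (hp : 0 ≤ p) (hpq : p < q) (hqN : (q : ℝ) + 1 ≤ N) :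
    b p * b (q + 1) ≤ b (p + 1) * b q := by
  have hp' : (0 : ℝ) ≤ p := by exact_mod_cast hp
  have hpq' : (p : ℝ) + 1 ≤ q := by exact_mod_cast hpq
  have h₁ := ha p q hpq.le
  have h₂ : a (p - 1) * a (q + 1) ≤ a p * a q := by simpa using ha (p - 1) q (by omega)
  have h₃ : a (p - 1) * a q ≤ a p * a (q - 1) := by simpa using ha (p - 1) (q - 1) (by omega)
  have h₄ : a p * a q ≤ a (p + 1) * a (q - 1) := by simpa using ha p (q - 1) (by omega)
  have hQ := quadratic_nonneg_of_sq_le (mul_nonneg (ha₀ p) (ha₀ (q - 1)))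
    (mul_nonneg (ha₀ (p + 1)) (ha₀ q))
    (by nlinarith [mul_le_mul_of_nonneg_left h₄ (mul_nonneg (ha₀ p) (ha₀ q))]) t
  have hN : 0 < N := by linarith
  refine le_of_mul_le_mul_left ?_ (mul_pos hN hN)
  rw [← sub_nonneg]
  have hdiff : N * N * (b (p + 1) * b q) - N * N * (b p * b (q + 1)) =
      (N - p) * (N - q - 1) * (a (p + 1) * a q - a p * a (q + 1))
      + t * p * (N - q - 1) * (a p * a q - a (p - 1) * a (q + 1))
      + t ^ 2 * p * (q + 1) * (a p * a (q - 1) - a (p - 1) * a q)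
      + t * q * (N - p - 1) * (a (p + 1) * a (q - 1) - a p * a q)
      + (q - p) * (a (p + 1) * a q - 2 * (a p * a q) * t + a p * a (q - 1) * t ^ 2) := by
    have hb' (j : ℤ) : b j = ((N - j) * a j + j * t * a (j - 1)) / N := by
      rw [← hb, mul_div_cancel_left₀ _ hN.ne']
    rw [hb' p, hb' (p + 1), hb' q, hb' (q + 1)]
    push_cast
    simp only [add_sub_cancel_right]
    field_simp
    ring
  rw [hdiff]
  refine add_nonneg (add_nonneg (add_nonneg (add_nonneg ?_ ?_) ?_) ?_) ?_
  · exact mul_nonneg (mul_nonneg (by linarith) (by linarith)) (sub_nonneg.2 h₁)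
  · exact mul_nonneg (mul_nonneg (mul_nonneg ht hp') (by linarith)) (sub_nonneg.2 h₂)
  · exact mul_nonneg (mul_nonneg (mul_nonneg (sq_nonneg t) hp') (by linarith)) (sub_nonneg.2 h₃)
  · exact mul_nonneg (mul_nonneg (mul_nonneg ht (by linarith)) (by linarith)) (sub_nonneg.2 h₄)
  · exact mul_nonneg (by linarith) hQ

theorem ratioAntitone_Eseq (n : ℕ) (x : Fin n → ℝ) (hx : 0 ≤ x) : RatioAntitone (Eseq n x) := by
  induction n with
  | zero =>
    exact .of_interior 0 (Eseq_nonneg hx) (fun _ => Eseq_of_neg x) (fun _ => Eseq_of_gt x)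
      fun p q hp hpq hq => by omega
  | succ n ih =>
    refine .of_interior (n + 1) (Eseq_nonneg hx) (fun _ => Eseq_of_neg x) (fun _ => Eseq_of_gt x)
      fun p q hp hpq hq => ?_
    exact (ih (Fin.tail x) fun i => hx i.succ).of_recurrence (Eseq_nonneg fun i => hx i.succ)
      (hx 0) (succ_mul_Eseq n x) hp hpq (by exact_mod_cast hq)

theorem generalized_newton_general (n i k : ℕ) (hi : 1 ≤ i) (hik : i ≤ k)
    (x : Fin n → ℝ) (hx : ∀ j, 0 ≤ x j) :
    E n (i - 1) x * E n (k + 1) x ≤ E n i x * E n k x := by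
  obtain ⟨p, rfl⟩ := Nat.exists_eq_add_of_le' hi
  exact ratioAntitone_Eseq n x hx p k (by omega)

theorem generalized_newton (n i k : ℕ) (hi : 1 ≤ i) (hik : i ≤ k) (hk : k + 1 ≤ n)
    (x : Fin n → ℝ) (hx : ∀ j, 0 ≤ x j) :
    E n (i - 1) x * E n (k + 1) x ≤ E n i x * E n k x :=
  generalized_newton_general n i k hi hik x hx
end

section
/- For integers p ≥ q ≥ 1, the polynomial P_p^q − P_q^p lies in S; equivalently, (P_p^q − P_q^p)(x₁²,…,xₙ²) is a sum of squares of polynomials (power mean inequality as a sum of squares). -/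
/-!
`S` is a subsemiring containing every `P_m` and every nonnegative constant. Its basic elements are
`P_{q+r+1} P_q - P_{q+r} P_{q+1}`: by Chebyshev's sum identity this is
`(1 / 2n²) Σ_{i,j} x_i^q x_j^q (x_i^r - x_j^r) (x_i - x_j)`, and after `x ↦ x²` each summand is
`(x_i^q x_j^q)² (Σ_{k<r} x_i^{2k} x_j^{2(r-1-k)}) (x_i² - x_j²)²`, a sum of squares. Then
`P_{p+1}^{q+1} - P_p^{q+1} P_{q+1} = P_{p+1} (P_{p+1}^q - P_p^q P_q) + P_p^q (P_{p+1} P_q - P_p P_{q+1})`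
gives `P_{p+1}^q - P_p^q P_q ∈ S` by induction on `q`, and
`P_{p+1}^q - P_q^{p+1} = (P_{p+1}^q - P_p^q P_q) + P_q (P_p^q - P_q^p)` gives the theorem by induction on `p`.
-/

open Finset MvPolynomial

theorem Finset.two_mul_sum_mul_sum_sub_sum_mul_sum {ι R : Type*} [CommRing R] (s : Finset ι)
    (w f g : ι → R) :
    2 * ((∑ i ∈ s, w i * f i * g i) * ∑ i ∈ s, w i - (∑ i ∈ s, w i * f i) * ∑ i ∈ s, w i * g i) =
      ∑ i ∈ s, ∑ j ∈ s, w i * w j * (f i - f j) * (g i - g j) := by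
  have expand : ∀ i j, w i * w j * (f i - f j) * (g i - g j) =
      (w i * f i * g i * w j - w i * f i * (w j * g j)) +
        (w j * f j * g j * w i - w j * f j * (w i * g i)) := fun i j => by ring
  simp only [expand, sum_add_distrib, sum_sub_distrib]
  rw [sum_comm (f := fun i j => w j * f j * g j * w i),
    sum_comm (f := fun i j => w j * f j * (w i * g i))]
  simp only [← sum_mul_sum]
  ring

theorem IsSumSq.sq_pow_sub_sq_pow_mul_sq_sub_sq {R : Type*} [CommRing R] (a b : R) (r : ℕ) :
    IsSumSq (((a ^ 2) ^ r - (b ^ 2) ^ r) * (a ^ 2 - b ^ 2)) := by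
  have hsq : ∀ k ∈ range r, (a ^ 2) ^ k * (b ^ 2) ^ (r - 1 - k) * ((a ^ 2 - b ^ 2) * (a ^ 2 - b ^ 2)) =
      (a ^ k * b ^ (r - 1 - k) * (a ^ 2 - b ^ 2)) * (a ^ k * b ^ (r - 1 - k) * (a ^ 2 - b ^ 2)) :=
    fun k _ => by ring
  rw [← geom_sum₂_mul, mul_assoc, sum_mul, sum_congr rfl hsq]
  exact IsSumSq.sum_mul_self _ _

namespace MvPolynomial

variable {σ : Type*}

/-- The semiring `S` of polynomials `p` for which `p(x₁², …, xₙ²)` is a sum of squares. -/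
noncomputable def evenSumSq (σ : Type*) : Subsemiring (MvPolynomial σ ℝ) :=
  (Subsemiring.sumSq _).comap (bind₁ fun j : σ => (X j : MvPolynomial σ ℝ) ^ 2).toRingHom

theorem mem_evenSumSq {p : MvPolynomial σ ℝ} :
    p ∈ evenSumSq σ ↔ IsSumSq (bind₁ (fun j : σ => (X j : MvPolynomial σ ℝ) ^ 2) p) :=
  Subsemiring.mem_sumSq

theorem C_mem_evenSumSq {c : ℝ} (hc : 0 ≤ c) : C c ∈ evenSumSq σ := by
  rw [mem_evenSumSq, bind₁_C_right, ← Real.mul_self_sqrt hc, C_mul]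
  exact IsSumSq.mul_self _

theorem smul_mem_evenSumSq {c : ℝ} (hc : 0 ≤ c) {p : MvPolynomial σ ℝ} (hp : p ∈ evenSumSq σ) :
    c • p ∈ evenSumSq σ := by
  rw [smul_eq_C_mul]
  exact mul_mem (C_mem_evenSumSq hc) hp

theorem X_pow_mem_evenSumSq (i : σ) (m : ℕ) : X i ^ m ∈ evenSumSq σ := by
  rw [mem_evenSumSq, map_pow, bind₁_X_right, ← pow_mul, mul_comm, pow_mul, sq]
  exact IsSumSq.mul_self _

theorem X_pow_mul_X_pow_mul_sub_mul_sub_mem_evenSumSq (i j : σ) (q r : ℕ) :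
    X i ^ q * X j ^ q * (X i ^ r - X j ^ r) * (X i - X j) ∈ evenSumSq σ := by
  rw [mul_assoc, mem_evenSumSq, map_mul]
  refine IsSumSq.mul ?_ ?_
  · exact mem_evenSumSq.1 (mul_mem (X_pow_mem_evenSumSq i q) (X_pow_mem_evenSumSq j q))
  · simpa only [map_mul, map_sub, map_pow, bind₁_X_right] using
      IsSumSq.sq_pow_sub_sq_pow_mul_sq_sub_sq (X i : MvPolynomial σ ℝ) (X j) r

end MvPolynomial

theorem psum_mem_evenSumSq (n m : ℕ) : psum n m ∈ evenSumSq (Fin n) :=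
  smul_mem_evenSumSq (by positivity) (sum_mem fun i _ => X_pow_mem_evenSumSq i m)

-- Not `P_0 = 1`: for `n = 0` the factor `(n : ℝ)⁻¹` is `0`, so `P_0 = 0`.
theorem one_sub_psum_zero_mem_evenSumSq (n : ℕ) : 1 - psum n 0 ∈ evenSumSq (Fin n) := by
  rcases eq_or_ne n 0 with rfl | hn
  · simp [_root_.psum, one_mem]
  · have psum_zero : psum n 0 = 1 := by
      simp only [_root_.psum, pow_zero, sum_const, card_univ, Fintype.card_fin]
      rw [← Nat.cast_smul_eq_nsmul ℝ, smul_smul,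
        inv_mul_cancel₀ (Nat.cast_ne_zero.2 hn), one_smul]
    rw [psum_zero, sub_self]
    exact zero_mem _

theorem psum_mul_psum_sub_psum_mul_psum_mem_evenSumSq (n q r : ℕ) :
    psum n (q + r + 1) * psum n q - psum n (q + r) * psum n (q + 1) ∈ evenSumSq (Fin n) := by
  set T : ℕ → MvPolynomial (Fin n) ℝ := fun m => ∑ j, X j ^ m
  have psum_mul_psum (a b : ℕ) : psum n a * psum n b = ((n : ℝ)⁻¹ * (n : ℝ)⁻¹) • (T a * T b) :=
    smul_mul_smul_comm _ _ _ _
  have chebyshev : T (q + r + 1) * T q - T (q + r) * T (q + 1) =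
      (2 : ℝ)⁻¹ • ∑ i, ∑ j, X i ^ q * X j ^ q * (X i ^ r - X j ^ r) * (X i - X j) := by
    have := two_mul_sum_mul_sum_sub_sum_mul_sum univ (X · ^ q) (X · ^ r)
      (X : Fin n → MvPolynomial (Fin n) ℝ)
    simp only [← pow_add, ← pow_succ] at this
    rw [← this, two_mul, ← two_smul ℝ, inv_smul_smul₀ two_ne_zero]
  rw [psum_mul_psum, psum_mul_psum, ← smul_sub, chebyshev]
  refine smul_mem_evenSumSq (by positivity) (smul_mem_evenSumSq (by norm_num) ?_)
  exact sum_mem fun i _ => sum_mem fun j _ => X_pow_mul_X_pow_mul_sub_mul_sub_mem_evenSumSq i j q r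

theorem psum_succ_pow_sub_psum_pow_mul_psum_mem_evenSumSq (n : ℕ) {p q : ℕ} (hqp : q ≤ p) :
    psum n (p + 1) ^ q - psum n p ^ q * psum n q ∈ evenSumSq (Fin n) := by
  induction q with
  | zero => simpa using one_sub_psum_zero_mem_evenSumSq n
  | succ q ih =>
    obtain ⟨r, rfl⟩ := Nat.exists_eq_add_of_le (Nat.le_of_succ_le hqp)
    have step : psum n (q + r + 1) ^ (q + 1) - psum n (q + r) ^ (q + 1) * psum n (q + 1) =
        psum n (q + r + 1) * (psum n (q + r + 1) ^ q - psum n (q + r) ^ q * psum n q) +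
          psum n (q + r) ^ q *
            (psum n (q + r + 1) * psum n q - psum n (q + r) * psum n (q + 1)) := by
      ring
    rw [step]
    exact add_mem (mul_mem (psum_mem_evenSumSq n _) (ih (Nat.le_of_succ_le hqp)))
      (mul_mem (pow_mem (psum_mem_evenSumSq n _) q)
        (psum_mul_psum_sub_psum_mul_psum_mem_evenSumSq n q r))

theorem psum_pow_sub_psum_pow_mem_evenSumSq (n : ℕ) {p q : ℕ} (hqp : q ≤ p) :
    psum n p ^ q - psum n q ^ p ∈ evenSumSq (Fin n) := by
  induction p, hqp using Nat.le_induction with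
  | base => simp
  | succ p hqp ih =>
    have step : psum n (p + 1) ^ q - psum n q ^ (p + 1) =
        (psum n (p + 1) ^ q - psum n p ^ q * psum n q) +
          psum n q * (psum n p ^ q - psum n q ^ p) := by
      ring
    rw [step]
    exact add_mem (psum_succ_pow_sub_psum_pow_mul_psum_mem_evenSumSq n hqp)
      (mul_mem (psum_mem_evenSumSq n q) ih)

theorem power_mean_sos_general (n p q : ℕ) (hpq : q ≤ p) :
    IsSumSq (bind₁ (fun j : Fin n => (X j : MvPolynomial (Fin n) ℝ) ^ 2)
      (psum n p ^ q - psum n q ^ p)) :=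
  mem_evenSumSq.1 (psum_pow_sub_psum_pow_mem_evenSumSq n hpq)

theorem power_mean_sos (n p q : ℕ) (hq : 1 ≤ q) (hpq : q ≤ p) :
    IsSumSq (bind₁ (fun j : Fin n => (X j : MvPolynomial (Fin n) ℝ) ^ 2)
      (psum n p ^ q - psum n q ^ p)) :=
  power_mean_sos_general n p q hpq
end

section
/- For integers p ≥ q ≥ r ≥ 0, the polynomial P_p^{q−r}·P_r^{p−q} − P_q^{p−r} lies in S; equivalently its substitution x_j ↦ x_j² is a sum of squares of polynomials (Lyapunov's inequality as a sum of squares). -/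
/-!
Work in the cone `S` (a subsemiring containing every square and every variable) and write
`y ≽ x` for `y - x ∈ S`. The sequence `m ↦ P_m` is log-convex for this order:
`P_{b+s+t} P_b ≽ P_{b+s} P_{b+t}`, because twice the difference is
`n⁻² Σ_{i,j} (x_i x_j)^b (x_i^s - x_j^s) (x_i^t - x_j^t)`, and each summand is
`(x_i x_j)^b (x_i - x_j)²` times two geometric sums in the `x`'s. Log-convexity gives
`P_{r+i+j}^i P_r^j ≽ P_{r+i}^{i+j}` by strong induction on `i + j`: raise one instance of
log-convexity to the power `min i j` (`y ≽ x ≽ 0` implies `y^k ≽ x^k` by the geometric-sum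
factorization of `y^k - x^k`) and multiply it with the induction hypothesis.
-/

open Finset MvPolynomial

section WeightedPowerSum

variable {ι R : Type*} [Fintype ι] [CommRing R]

def weightedPowerSum (w u : ι → R) (m : ℕ) : R :=
  ∑ i, w i * u i ^ m

theorem two_mul_weightedPowerSum_mul_sub_mul (w u : ι → R) (b s t : ℕ) :
    2 * (weightedPowerSum w u (b + s + t) * weightedPowerSum w u b
      - weightedPowerSum w u (b + s) * weightedPowerSum w u (b + t))
      = ∑ i, ∑ j,
          w i * w j * ((u i * u j) ^ b * (u i ^ s - u j ^ s) * (u i ^ t - u j ^ t)) := by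
  have hterm : ∀ i j, w i * w j * ((u i * u j) ^ b * (u i ^ s - u j ^ s) * (u i ^ t - u j ^ t))
      = w i * u i ^ (b + s + t) * (w j * u j ^ b) + w i * u i ^ b * (w j * u j ^ (b + s + t))
        - w i * u i ^ (b + s) * (w j * u j ^ (b + t))
        - w i * u i ^ (b + t) * (w j * u j ^ (b + s)) := fun i j => by ring
  simp only [hterm, sum_sub_distrib, sum_add_distrib, ← sum_mul_sum, weightedPowerSum]
  ring

end WeightedPowerSum

namespace Subsemiring

variable {R : Type*} [CommRing R] (S : Subsemiring R)

theorem pow_sub_pow_mem {x y : R} (hx : x ∈ S) (hxy : y - x ∈ S) (k : ℕ) :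
    y ^ k - x ^ k ∈ S := by
  have hy : y ∈ S := by simpa using S.add_mem hxy hx
  rw [← geom_sum₂_mul]
  exact S.mul_mem (S.sum_mem fun i _ => S.mul_mem (S.pow_mem hy _) (S.pow_mem hx _)) hxy

theorem mul_pow_mul_sub_pow_mem {a b c d e : R} (hc : c ∈ S) (hd : d ∈ S) (he : e ∈ S)
    (habcd : a * b - c * d ∈ S) (k l : ℕ) (hdec : d ^ k * e - c ^ l ∈ S) :
    (a * b) ^ k * e - c ^ (k + l) ∈ S := by
  have hpow := S.pow_sub_pow_mem (S.mul_mem hc hd) (by simpa using habcd) k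
  rw [show (a * b) ^ k * e - c ^ (k + l)
      = ((a * b) ^ k - (c * d) ^ k) * e + c ^ k * (d ^ k * e - c ^ l) by ring]
  exact S.add_mem (S.mul_mem hpow he) (S.mul_mem (S.pow_mem hc k) hdec)

theorem pow_mul_pow_sub_pow_mem_of_logConvex {f : ℕ → R} (hf : ∀ m, f m ∈ S)
    (hconv : ∀ b s t, f (b + s + t) * f b - f (b + s) * f (b + t) ∈ S) (r i j : ℕ) :
    f (r + i + j) ^ i * f r ^ j - f (r + i) ^ (i + j) ∈ S := by
  induction h : i + j using Nat.strong_induction_on generalizing r i j with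
  | _ N ih =>
  subst h
  rcases le_total i j with hij | hji
  · obtain ⟨m, rfl⟩ := Nat.exists_eq_add_of_le hij
    rcases i.eq_zero_or_pos with rfl | hi
    · simp
    have hconv' := hconv r i (i + m)
    rw [show r + (i + m) = r + i + m by omega] at hconv'
    have := S.mul_pow_mul_sub_pow_mem (hf _) (hf _) (S.pow_mem (hf r) m) hconv' i (i + m)
      (ih (i + m) (by omega) r i m rfl)
    convert this using 2; ring
  · obtain ⟨m, rfl⟩ := Nat.exists_eq_add_of_le hji
    rcases j.eq_zero_or_pos with rfl | hj
    · simp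
    have hrec := ih (m + j) (by omega) (r + j) m j rfl
    rw [show r + j + m + j = r + (j + m) + j by omega, show r + j + m = r + (j + m) by omega,
      mul_comm] at hrec
    have := S.mul_pow_mul_sub_pow_mem (hf _) (hf _) (S.pow_mem (hf _) m) (hconv r (j + m) j) j
      (m + j) hrec
    convert this using 2 <;> ring

theorem weightedPowerSum_mem {ι : Type*} [Fintype ι] {w u : ι → R} (hw : ∀ i, w i ∈ S)
    (hu : ∀ i, u i ∈ S) (m : ℕ) : weightedPowerSum w u m ∈ S :=
  S.sum_mem fun i _ => S.mul_mem (hw i) (S.pow_mem (hu i) m)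

theorem mem_of_two_mul_mem [Invertible (2 : R)] (hsq : ∀ a, a * a ∈ S) {y : R}
    (h : 2 * y ∈ S) : y ∈ S := by
  have half : (⅟2 : R) = ⅟2 * ⅟2 + ⅟2 * ⅟2 := by
    rw [← two_mul, ← mul_assoc, mul_invOf_self, one_mul]
  rw [← invOf_mul_cancel_left (2 : R) y]
  exact S.mul_mem (half ▸ S.add_mem (hsq _) (hsq _)) h

theorem mul_pow_mul_sub_pow_mul_sub_pow_mem (hsq : ∀ a, a * a ∈ S) {u v : R} (hu : u ∈ S)
    (hv : v ∈ S) (b s t : ℕ) :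
    (u * v) ^ b * (u ^ s - v ^ s) * (u ^ t - v ^ t) ∈ S := by
  have hgeom : ∀ k, ∑ i ∈ range k, u ^ i * v ^ (k - 1 - i) ∈ S := fun k =>
    S.sum_mem fun i _ => S.mul_mem (S.pow_mem hu _) (S.pow_mem hv _)
  rw [← geom_sum₂_mul u v s, ← geom_sum₂_mul u v t]
  have := S.mul_mem (S.mul_mem (S.pow_mem (S.mul_mem hu hv) b) (hsq (u - v)))
    (S.mul_mem (hgeom s) (hgeom t))
  convert this using 1
  ring

theorem weightedPowerSum_mul_sub_mul_mem [Invertible (2 : R)] {ι : Type*} [Fintype ι]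
    {w u : ι → R} (hsq : ∀ a, a * a ∈ S) (hw : ∀ i, w i ∈ S) (hu : ∀ i, u i ∈ S)
    (b s t : ℕ) :
    weightedPowerSum w u (b + s + t) * weightedPowerSum w u b
      - weightedPowerSum w u (b + s) * weightedPowerSum w u (b + t) ∈ S := by
  refine S.mem_of_two_mul_mem hsq ?_
  rw [two_mul_weightedPowerSum_mul_sub_mul]
  exact S.sum_mem fun i _ => S.sum_mem fun j _ => S.mul_mem (S.mul_mem (hw i) (hw j))
    (S.mul_pow_mul_sub_pow_mul_sub_pow_mem hsq (hu i) (hu j) b s t)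

end Subsemiring

/-- The semiring `S`. -/
noncomputable def sumSqAtSquares (σ : Type*) : Subsemiring (MvPolynomial σ ℝ) :=
  (Subsemiring.sumSq _).comap (bind₁ fun j => (X j : MvPolynomial σ ℝ) ^ 2).toRingHom

section SumSqAtSquares

variable {σ : Type*}

theorem mem_sumSqAtSquares {P : MvPolynomial σ ℝ} :
    P ∈ sumSqAtSquares σ ↔ IsSumSq (bind₁ (fun j => (X j : MvPolynomial σ ℝ) ^ 2) P) :=
  Subsemiring.mem_sumSq

theorem mul_self_mem_sumSqAtSquares (P : MvPolynomial σ ℝ) : P * P ∈ sumSqAtSquares σ := by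
  rw [mem_sumSqAtSquares, map_mul]
  exact IsSumSq.mul_self _

theorem X_mem_sumSqAtSquares (j : σ) : X j ∈ sumSqAtSquares σ := by
  rw [mem_sumSqAtSquares, bind₁_X_right, sq]
  exact IsSumSq.mul_self _

theorem C_mem_sumSqAtSquares {c : ℝ} (hc : 0 ≤ c) : C c ∈ sumSqAtSquares σ := by
  rw [← Real.mul_self_sqrt hc, C_mul]
  exact mul_self_mem_sumSqAtSquares _

noncomputable instance : Invertible (2 : MvPolynomial σ ℝ) :=
  (Invertible.map (C : ℝ →+* MvPolynomial σ ℝ) 2).copy 2 (map_ofNat C 2).symm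

end SumSqAtSquares

theorem psum_eq_weightedPowerSum (n m : ℕ) :
    psum n m = weightedPowerSum (fun _ => C (n : ℝ)⁻¹) X m := by
  simp only [_root_.psum, weightedPowerSum, smul_sum, smul_eq_C_mul]

theorem psum_mem_sumSqAtSquares (n m : ℕ) : psum n m ∈ sumSqAtSquares (Fin n) := by
  rw [psum_eq_weightedPowerSum]
  exact Subsemiring.weightedPowerSum_mem _ (fun _ => C_mem_sumSqAtSquares (by positivity))
    X_mem_sumSqAtSquares m

theorem psum_mul_sub_mul_mem_sumSqAtSquares (n b s t : ℕ) :
    psum n (b + s + t) * psum n b - psum n (b + s) * psum n (b + t) ∈ sumSqAtSquares (Fin n) := by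
  simp only [psum_eq_weightedPowerSum]
  exact Subsemiring.weightedPowerSum_mul_sub_mul_mem _ mul_self_mem_sumSqAtSquares
    (fun _ => C_mem_sumSqAtSquares (by positivity)) X_mem_sumSqAtSquares b s t

theorem lyapunov_sos (n p q r : ℕ) (hqp : q ≤ p) (hrq : r ≤ q) :
    IsSumSq (bind₁ (fun j : Fin n => (X j : MvPolynomial (Fin n) ℝ) ^ 2)
      (psum n p ^ (q - r) * psum n r ^ (p - q) - psum n q ^ (p - r))) := by
  have key := (sumSqAtSquares (Fin n)).pow_mul_pow_sub_pow_mem_of_logConvex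
    (psum_mem_sumSqAtSquares n) (psum_mul_sub_mul_mem_sumSqAtSquares n) r (q - r) (p - q)
  rwa [show r + (q - r) + (p - q) = p by omega, show r + (q - r) = q by omega,
    show q - r + (p - q) = p - r by omega, mem_sumSqAtSquares] at key
end

section
/- For integers p ≥ q ≥ r ≥ 0, there is the identity P_p^{q−r} P_r^{p−q} − P_q^{p−r} = Σ_{i=r+1}^{q} Σ_{k=q}^{p−1} (P_{i−1}P_{k+1} − P_i P_k) · P_{i−1}^{k−q} P_i^{p−k−1} P_p^{q−i} P_q^{i−1−r} in ℝ[x₁,…,xₙ]. -/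
open Finset MvPolynomial

/-!
Both sums telescope, and only the ring structure of the values `P_m` matters. For fixed `i`, the
`k`-th summand is `g (k + 1) - g k` with `g k = P_{i-1}^{k-q} P_i^{p-k} P_k`, so the inner sum is
`P_{i-1}^{p-q} P_p - P_i^{p-q} P_q`. The resulting `i`-th summand is `h (i - 1) - h i` with
`h i = P_i^{p-q} P_p^{q-i} P_q^{i-r}`, and `h r - h q` is the left-hand side.
-/

section Telescoping

variable {R : Type*} [CommRing R] (a b : R) (f : ℕ → R)

theorem sum_Ico_mul_succ_sub_mul_mul_pow_mul_pow {q p : ℕ} (hqp : q ≤ p) :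
    ∑ k ∈ Ico q p, (a * f (k + 1) - b * f k) * (a ^ (k - q) * b ^ (p - k - 1)) =
      a ^ (p - q) * f p - b ^ (p - q) * f q := by
  have htele := sum_Ico_sub (fun k ↦ a ^ (k - q) * b ^ (p - k) * f k) hqp
  simp only [Nat.sub_self, pow_zero, mul_one, one_mul] at htele
  rw [← htele]
  refine sum_congr rfl fun k hk ↦ ?_
  obtain ⟨j, rfl⟩ : ∃ j, k = q + j := ⟨k - q, by grind⟩
  obtain ⟨l, rfl⟩ : ∃ l, p = q + j + 1 + l := ⟨p - (q + j + 1), by grind⟩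
  simp only [show q + j + 1 - q = j + 1 by omega, show q + j + 1 + l - (q + j + 1) = l by omega,
    show q + j + 1 + l - (q + j) = l + 1 by omega, add_tsub_cancel_left, add_tsub_cancel_right]
  ring

theorem sum_Icc_pred_mul_sub_mul_mul_pow_mul_pow {r q : ℕ} (hrq : r ≤ q) :
    ∑ i ∈ Icc (r + 1) q, (f (i - 1) * a - f i * b) * (a ^ (q - i) * b ^ (i - 1 - r)) =
      a ^ (q - r) * f r - b ^ (q - r) * f q := by
  have htele := sum_Ico_sub (fun i ↦ a ^ (q - i) * b ^ (i - r) * f i) hrq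
  simp only [Nat.sub_self, pow_zero, mul_one, one_mul] at htele
  rw [← neg_sub, ← htele, ← sum_neg_distrib, ← Ico_add_one_right_eq_Icc, ← sum_Ico_add' _ r q 1]
  refine sum_congr rfl fun i hi ↦ ?_
  obtain ⟨j, rfl⟩ : ∃ j, i = r + j := ⟨i - r, by grind⟩
  obtain ⟨l, rfl⟩ : ∃ l, q = r + j + 1 + l := ⟨q - (r + j + 1), by grind⟩
  simp only [show r + j + 1 + l - (r + j + 1) = l by omega,
    show r + j + 1 + l - (r + j) = l + 1 by omega, show r + j + 1 - r = j + 1 by omega,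
    add_tsub_cancel_left, add_tsub_cancel_right]
  ring

end Telescoping

theorem lyapunov_identity (n p q r : ℕ) (hqp : q ≤ p) (hrq : r ≤ q) :
    psum n p ^ (q - r) * psum n r ^ (p - q) - psum n q ^ (p - r) =
      ∑ i ∈ Finset.Icc (r + 1) q, ∑ k ∈ Finset.Icc q (p - 1),
        (psum n (i - 1) * psum n (k + 1) - psum n i * psum n k) *
          (psum n (i - 1) ^ (k - q) * psum n i ^ (p - k - 1) *
           psum n p ^ (q - i) * psum n q ^ (i - 1 - r)) := by
  set P := psum n
  calc P p ^ (q - r) * P r ^ (p - q) - P q ^ (p - r)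
      = ∑ i ∈ Icc (r + 1) q, (P (i - 1) ^ (p - q) * P p - P i ^ (p - q) * P q) *
          (P p ^ (q - i) * P q ^ (i - 1 - r)) := by
        rw [sum_Icc_pred_mul_sub_mul_mul_pow_mul_pow _ _ (P · ^ (p - q)) hrq, ← pow_add,
          show q - r + (p - q) = p - r by omega]
    _ = _ := by
        refine sum_congr rfl fun i hi ↦ ?_
        rw [Icc_sub_one_right_eq_Ico_of_not_isMin (by simp at hi ⊢; omega),
          ← sum_Ico_mul_succ_sub_mul_mul_pow_mul_pow _ _ P hqp, sum_mul]
        refine sum_congr rfl fun k _ ↦ by ring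
end

section
/- For integers n ≥ p ≥ q ≥ r ≥ 0, the polynomial E_q^{p−r} − E_p^{q−r}·E_r^{p−q} lies in S; equivalently its substitution x_j ↦ x_j² is a sum of squares of polynomials (Lyapunov-type Maclaurin inequality as a sum of squares). -/
open Finset MvPolynomial

/-- The normalized `m`-th elementary symmetric polynomial `E_m`. -/
noncomputable def esym' (n : ℕ) (m : ℕ) : MvPolynomial (Fin n) ℝ :=
  ((n.choose m : ℝ))⁻¹ • ∑ s ∈ powersetCard m (univ : Finset (Fin n)), ∏ i ∈ s, X i

/-!
Write `e_k` for the unnormalised elementary symmetric polynomials. The Newton gap `e_p e_q - e_{p-1} e_{q+1}` (`p ≤ q`) lies in every subsemiring containing the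
variables: adding a variable `x` expands it into gaps of fewer variables with coefficients
`1, x, x²`. Double counting gives
`2 (a (n-b) e_a e_b - (n-a+1)(b+1) e_{a-1} e_{b+1}) = ∑_{i,j} (x_i - x_j)² gap_{ij}`,
where `gap_{ij}` is a Newton gap in the variables other than `x_i, x_j`. As `S` contains all
squares, all variables and all nonnegative constants, this puts `E_{a+1} E_b - E_a E_{b+1}`
(`a < b`) in `S`, and Lyapunov's inequality follows from these by a multiplicative induction.
-/

section ElementarySymmetric

variable {ι R : Type*} [CommRing R] (x : ι → R)

/-- Extended by `0` to negative degrees, so that the recursions below need no case split. -/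
noncomputable def esymmZ (s : Finset ι) (k : ℤ) : R :=
  if 0 ≤ k then ∑ t ∈ s.powersetCard k.toNat, ∏ i ∈ t, x i else 0

noncomputable def newtonGap (s : Finset ι) (p q : ℤ) : R :=
  esymmZ x s p * esymmZ x s q - esymmZ x s (p - 1) * esymmZ x s (q + 1)

variable {x}

theorem esymmZ_of_neg (s : Finset ι) {k : ℤ} (hk : k < 0) : esymmZ x s k = 0 :=
  if_neg hk.not_ge

theorem esymmZ_natCast (s : Finset ι) (k : ℕ) :
    esymmZ x s k = ∑ t ∈ s.powersetCard k, ∏ i ∈ t, x i := by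
  simp [esymmZ]

theorem esymmZ_zero (s : Finset ι) : esymmZ x s 0 = 1 := by
  simpa using esymmZ_natCast (x := x) s 0

theorem esymmZ_empty (k : ℤ) : esymmZ x ∅ k = if k = 0 then 1 else 0 := by
  rcases lt_trichotomy k 0 with hk | rfl | hk
  · simp [esymmZ_of_neg _ hk, hk.ne]
  · simp [esymmZ_zero]
  · lift k to ℕ using hk.le
    have hk : 0 < k := by omega
    simp [esymmZ_natCast, hk.ne', powersetCard_eq_empty.2 (show #(∅ : Finset ι) < k from hk)]

theorem newtonGap_self_sub_one (s : Finset ι) (p : ℤ) : newtonGap x s p (p - 1) = 0 := by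
  rw [newtonGap, sub_add_cancel, mul_comm, sub_self]

variable [DecidableEq ι]

theorem esymmZ_insert {s : Finset ι} {a : ι} (ha : a ∉ s) (k : ℤ) :
    esymmZ x (insert a s) k = esymmZ x s k + x a * esymmZ x s (k - 1) := by
  rcases lt_or_ge k 0 with hk | hk
  · simp [esymmZ_of_neg _ hk, esymmZ_of_neg _ (show k - 1 < 0 by omega)]
  obtain ⟨k, rfl⟩ : ∃ m : ℕ, k = m := ⟨k.toNat, by omega⟩
  cases k with
  | zero => simp [esymmZ_zero, esymmZ_of_neg]
  | succ k =>
    push_cast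
    rw [add_sub_cancel_right]
    simp only [← Nat.cast_succ, esymmZ_natCast]
    have notMem {t : Finset ι} (ht : t ∈ s.powersetCard k) : a ∉ t :=
      fun hat => ha ((mem_powersetCard.1 ht).1 hat)
    rw [powersetCard_succ_insert ha, sum_union, sum_image, mul_sum]
    · exact congrArg _ (sum_congr rfl fun t ht => prod_insert (notMem ht))
    · intro t ht u hu htu
      rw [← erase_insert (notMem ht), ← erase_insert (notMem hu)]
      exact congrArg (erase · a) htu
    · refine disjoint_left.2 fun t ht hat => ?_
      obtain ⟨u, -, rfl⟩ := mem_image.1 hat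
      exact ha ((mem_powersetCard.1 ht).1 (mem_insert_self a u))

theorem esymmZ_erase {s : Finset ι} {a : ι} (ha : a ∈ s) (k : ℤ) :
    esymmZ x s k = esymmZ x (s.erase a) k + x a * esymmZ x (s.erase a) (k - 1) := by
  conv_lhs => rw [← insert_erase ha]
  exact esymmZ_insert (notMem_erase a s) k

theorem newtonGap_insert {s : Finset ι} {a : ι} (ha : a ∉ s) (p q : ℤ) :
    newtonGap x (insert a s) p q = newtonGap x s p q
      + x a * (newtonGap x s p (q - 1) + newtonGap x s (p - 1) q)
      + x a ^ 2 * newtonGap x s (p - 1) (q - 1) := by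
  simp only [newtonGap, esymmZ_insert ha, add_sub_cancel_right, sub_add_cancel]
  ring

theorem newtonGap_mem (T : Subsemiring R) {s : Finset ι} (hx : ∀ i ∈ s, x i ∈ T) {p q : ℤ}
    (hpq : p ≤ q) : newtonGap x s p q ∈ T := by
  induction s using Finset.induction_on generalizing p q with
  | empty =>
    simp only [newtonGap, esymmZ_empty]
    split_ifs <;> first | omega | simp
  | insert a s ha ih =>
    have hxs : ∀ i ∈ s, x i ∈ T := fun i hi => hx i (mem_insert_of_mem hi)
    have hxa : x a ∈ T := hx a (mem_insert_self a s)
    have hcross : newtonGap x s p (q - 1) ∈ T := by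
      rcases hpq.lt_or_eq with hlt | rfl
      · exact ih hxs (by omega)
      · rw [newtonGap_self_sub_one]; exact zero_mem T
    rw [newtonGap_insert ha]
    exact add_mem (add_mem (ih hxs hpq) (mul_mem hxa (add_mem hcross (ih hxs (by omega)))))
      (mul_mem (pow_mem hxa 2) (ih hxs (by omega)))

theorem sum_mul_esymmZ_erase (s : Finset ι) (k : ℤ) :
    ∑ i ∈ s, x i * esymmZ x (s.erase i) k = ((k + 1 : ℤ) : R) * esymmZ x s (k + 1) := by
  induction s using Finset.induction_on generalizing k with
  | empty =>
    rw [sum_empty, esymmZ_empty]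
    split_ifs with hk <;> simp [hk]
  | insert a s ha ih =>
    have herase : ∀ i ∈ s, x i * esymmZ x ((insert a s).erase i) k
        = x i * esymmZ x (s.erase i) k + x a * (x i * esymmZ x (s.erase i) (k - 1)) := by
      intro i hi
      rw [erase_insert_of_ne (ne_of_mem_of_not_mem hi ha).symm,
        esymmZ_insert (fun h => ha (mem_of_mem_erase h))]
      ring
    rw [sum_insert ha, erase_insert ha, sum_congr rfl herase, sum_add_distrib, ← mul_sum, ih,
      ih, esymmZ_insert ha, sub_add_cancel, add_sub_cancel_right]
    push_cast
    ring

theorem sum_esymmZ_erase (s : Finset ι) (k : ℤ) :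
    ∑ i ∈ s, esymmZ x (s.erase i) k = ((#s - k : ℤ) : R) * esymmZ x s k := by
  have h := sum_congr rfl fun i (hi : i ∈ s) => esymmZ_erase (x := x) hi k
  rw [sum_const, sum_add_distrib, sum_mul_esymmZ_erase, sub_add_cancel, nsmul_eq_mul] at h
  push_cast
  linear_combination -h

theorem esymmZ_erase_mul_sub (s : Finset ι) {i j : ι} (hi : i ∈ s) (hj : j ∈ s) (c d : ℤ) :
    esymmZ x (s.erase i) c * esymmZ x (s.erase j) d
      - esymmZ x (s.erase j) c * esymmZ x (s.erase i) d
      = (x i - x j) * newtonGap x ((s.erase i).erase j) c (d - 1) := by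
  rcases eq_or_ne i j with rfl | hij
  · simp
  rw [esymmZ_erase (mem_erase.2 ⟨hij.symm, hj⟩) c, esymmZ_erase (mem_erase.2 ⟨hij.symm, hj⟩) d,
    esymmZ_erase (mem_erase.2 ⟨hij, hi⟩) c, esymmZ_erase (mem_erase.2 ⟨hij, hi⟩) d,
    erase_right_comm, newtonGap, sub_add_cancel]
  ring

theorem two_mul_newton_combination (s : Finset ι) (a b : ℤ) :
    2 * (((a * (#s - b) : ℤ) : R) * (esymmZ x s a * esymmZ x s b)
      - (((#s - a + 1) * (b + 1) : ℤ) : R) * (esymmZ x s (a - 1) * esymmZ x s (b + 1)))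
      = ∑ i ∈ s, ∑ j ∈ s, (x i - x j) ^ 2 * newtonGap x ((s.erase i).erase j) (a - 1) (b - 1) := by
  set f : ι → ι → R := fun i j =>
    (x i - x j) * (esymmZ x (s.erase i) (a - 1) * esymmZ x (s.erase j) b)
  have hf : ∑ i ∈ s, ∑ j ∈ s, f i j
      = ((a * (#s - b) : ℤ) : R) * (esymmZ x s a * esymmZ x s b)
        - (((#s - a + 1) * (b + 1) : ℤ) : R) * (esymmZ x s (a - 1) * esymmZ x s (b + 1)) := by
    have hsplit : ∀ i j, f i j = x i * esymmZ x (s.erase i) (a - 1) * esymmZ x (s.erase j) b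
        - esymmZ x (s.erase i) (a - 1) * (x j * esymmZ x (s.erase j) b) := fun i j => by ring
    simp only [hsplit, sum_sub_distrib, ← sum_mul_sum, sum_mul_esymmZ_erase, sum_esymmZ_erase,
      sub_add_cancel]
    push_cast
    ring
  rw [← hf, two_mul]
  nth_rewrite 2 [sum_comm]
  rw [← sum_add_distrib]
  refine sum_congr rfl fun i hi => ?_
  rw [← sum_add_distrib]
  refine sum_congr rfl fun j hj => ?_
  linear_combination (x i - x j) * esymmZ_erase_mul_sub (x := x) s hi hj (a - 1) b

end ElementarySymmetric

section Lyapunov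

variable {R : Type*} [CommRing R] (T : Subsemiring R) {E : ℕ → R} {n : ℕ}

theorem newton_chain_sub_mem (hE : ∀ k, E k ∈ T)
    (hN : ∀ a b, a < b → b < n → E (a + 1) * E b - E a * E (b + 1) ∈ T) {r s m : ℕ}
    (hm : r + s ≤ m) (hmn : m < n) : E (r + s) * E m ^ s - E (m + 1) ^ s * E r ∈ T := by
  induction s with
  | zero => simp
  | succ s ih =>
    rw [← add_assoc]
    have key : E (r + s + 1) * E m ^ (s + 1) - E (m + 1) ^ (s + 1) * E r
        = E m ^ s * (E (r + s + 1) * E m - E (r + s) * E (m + 1))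
          + E (m + 1) * (E (r + s) * E m ^ s - E (m + 1) ^ s * E r) := by ring
    rw [key]
    exact add_mem (mul_mem (pow_mem (hE m) s) (hN _ _ (by omega) hmn))
      (mul_mem (hE _) (ih (by omega)))

/-- Lyapunov's inequality `E_q^{p-r} ≥ E_p^{q-r} E_r^{p-q}` with `q = r + s`, `p = r + s + k`. -/
theorem lyapunov_sub_mem_of_newton (hE : ∀ k, E k ∈ T)
    (hN : ∀ a b, a < b → b < n → E (a + 1) * E b - E a * E (b + 1) ∈ T) {r s k : ℕ}
    (h : r + s + k ≤ n) : E (r + s) ^ (s + k) - E (r + s + k) ^ s * E r ^ k ∈ T := by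
  induction k with
  | zero => simp
  | succ k ih =>
    rw [← add_assoc, ← add_assoc]
    have key : E (r + s) ^ (s + k + 1) - E (r + s + k + 1) ^ s * E r ^ (k + 1)
        = E (r + s) * (E (r + s) ^ (s + k) - E (r + s + k) ^ s * E r ^ k)
          + E r ^ k * (E (r + s) * E (r + s + k) ^ s - E (r + s + k + 1) ^ s * E r) := by ring
    rw [key]
    exact add_mem (mul_mem (hE _) (ih (by omega)))
      (mul_mem (pow_mem (hE r) k) (newton_chain_sub_mem T hE hN le_self_add (by omega)))

end Lyapunov

section SquareSubstitution

/-- The semiring `S`. -/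
noncomputable def sqSubstSumSq (σ : Type*) : Subsemiring (MvPolynomial σ ℝ) :=
  (Subsemiring.sumSq _).comap (bind₁ fun j : σ => (X j : MvPolynomial σ ℝ) ^ 2).toRingHom

variable {σ : Type*}

theorem mem_sqSubstSumSq {f : MvPolynomial σ ℝ} :
    f ∈ sqSubstSumSq σ ↔ IsSumSq (bind₁ (fun j => (X j : MvPolynomial σ ℝ) ^ 2) f) :=
  Subsemiring.mem_sumSq

theorem sq_mem_sqSubstSumSq (f : MvPolynomial σ ℝ) : f ^ 2 ∈ sqSubstSumSq σ := by
  rw [mem_sqSubstSumSq, map_pow, sq]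
  exact IsSumSq.mul_self _

theorem X_mem_sqSubstSumSq (i : σ) : X i ∈ sqSubstSumSq σ := by
  rw [mem_sqSubstSumSq, bind₁_X_right, sq]
  exact IsSumSq.mul_self _

theorem smul_mem_sqSubstSumSq {r : ℝ} (hr : 0 ≤ r) {f : MvPolynomial σ ℝ}
    (hf : f ∈ sqSubstSumSq σ) : r • f ∈ sqSubstSumSq σ := by
  rw [smul_eq_C_mul, ← Real.sq_sqrt hr, map_pow]
  exact mul_mem (sq_mem_sqSubstSumSq _) hf

end SquareSubstitution

section Normalized

variable {n : ℕ}

theorem esym'_eq_smul_esymmZ (m : ℕ) :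
    esym' n m = ((n.choose m : ℝ))⁻¹ • esymmZ X (univ : Finset (Fin n)) m := by
  rw [esym', esymmZ_natCast]

theorem esym'_mem_sqSubstSumSq (m : ℕ) : esym' n m ∈ sqSubstSumSq (Fin n) :=
  smul_mem_sqSubstSumSq (by positivity)
    (sum_mem fun _ _ => prod_mem fun i _ => X_mem_sqSubstSumSq i)

theorem choose_newton_ratio {a b : ℕ} (ha : a < n) (hb : b < n) :
    (a + 1) * (n - b) * n.choose (a + 1) * n.choose b
      * ((n.choose a : ℝ)⁻¹ * (n.choose (b + 1) : ℝ)⁻¹) = (n - a) * (b + 1) := by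
  have hA : (n.choose (a + 1) : ℝ) * (a + 1) = n.choose a * (n - a) := by
    rw [← Nat.cast_sub ha.le]
    exact_mod_cast Nat.choose_succ_right_eq n a
  have hB : (n.choose (b + 1) : ℝ) * (b + 1) = n.choose b * (n - b) := by
    rw [← Nat.cast_sub hb.le]
    exact_mod_cast Nat.choose_succ_right_eq n b
  have hA0 : (n.choose a : ℝ) ≠ 0 := Nat.cast_ne_zero.2 (Nat.choose_pos ha.le).ne'
  have hB1 : (n.choose (b + 1) : ℝ) ≠ 0 := Nat.cast_ne_zero.2 (Nat.choose_pos hb).ne'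
  calc _ = n.choose (a + 1) * (a + 1) * (n.choose b * (n - b))
        * ((n.choose a : ℝ)⁻¹ * (n.choose (b + 1) : ℝ)⁻¹) := by ring
    _ = n.choose a * (n - a) * (n.choose (b + 1) * (b + 1))
        * ((n.choose a : ℝ)⁻¹ * (n.choose (b + 1) : ℝ)⁻¹) := by rw [hA, ← hB]
    _ = _ := by field_simp

theorem smul_esym'_newton {a b : ℕ} (ha : a < n) (hb : b < n) :
    (2 * ((a + 1) * (n - b) * n.choose (a + 1) * n.choose b) : ℝ) •
      (esym' n (a + 1) * esym' n b - esym' n a * esym' n (b + 1))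
      = ∑ i, ∑ j, (X i - X j) ^ 2 * newtonGap X ((univ.erase i).erase j) a (b - 1) := by
  have hA1 : (n.choose (a + 1) : ℝ) ≠ 0 := Nat.cast_ne_zero.2 (Nat.choose_pos ha).ne'
  have hB0 : (n.choose b : ℝ) ≠ 0 := Nat.cast_ne_zero.2 (Nat.choose_pos hb.le).ne'
  have hscale₁ : (2 * ((a + 1) * (n - b) * n.choose (a + 1) * n.choose b) : ℝ)
      * ((n.choose (a + 1) : ℝ)⁻¹ * (n.choose b : ℝ)⁻¹) = 2 * ((a + 1) * (n - b)) := by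
    field_simp
  have hscale₂ := congrArg (2 * ·) (choose_newton_ratio ha hb)
  simp only [← mul_assoc] at hscale₂
  have h := two_mul_newton_combination (x := (X : Fin n → MvPolynomial (Fin n) ℝ)) univ (a + 1) b
  simp only [card_univ, Fintype.card_fin, add_sub_cancel_right] at h
  rw [← h]
  simp only [esym'_eq_smul_esymmZ, smul_eq_C_mul]
  have hC₁ := congrArg (C : ℝ → MvPolynomial (Fin n) ℝ) hscale₁
  have hC₂ := congrArg (C : ℝ → MvPolynomial (Fin n) ℝ) hscale₂
  simp only [map_mul, map_add, map_sub, map_natCast, map_ofNat, map_one] at hC₁ hC₂ ⊢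
  push_cast
  linear_combination (esymmZ X univ (a + 1) * esymmZ X univ b) * hC₁
    - (esymmZ X univ a * esymmZ X univ (b + 1)) * hC₂

theorem esym'_newton_mem_sqSubstSumSq {a b : ℕ} (hab : a < b) (hbn : b < n) :
    esym' n (a + 1) * esym' n b - esym' n a * esym' n (b + 1) ∈ sqSubstSumSq (Fin n) := by
  have hc : (0 : ℝ) < 2 * ((a + 1) * (n - b) * n.choose (a + 1) * n.choose b) := by
    have hb : (b : ℝ) < n := by exact_mod_cast hbn
    have := Nat.choose_pos (show a + 1 ≤ n by omega)
    have := Nat.choose_pos hbn.le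
    have := sub_pos.2 hb
    positivity
  rw [← inv_smul_smul₀ hc.ne' (_ - _), smul_esym'_newton (by omega) hbn]
  refine smul_mem_sqSubstSumSq (inv_nonneg.2 hc.le) (sum_mem fun i _ => sum_mem fun j _ => ?_)
  exact mul_mem (sq_mem_sqSubstSumSq _)
    (newtonGap_mem _ (fun i _ => X_mem_sqSubstSumSq i) (by omega))

end Normalized

theorem maclaurin_lyapunov_sos (n p q r : ℕ) (hqp : q ≤ p) (hrq : r ≤ q) (hpn : p ≤ n) :
    IsSumSq (bind₁ (fun j : Fin n => (X j : MvPolynomial (Fin n) ℝ) ^ 2)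
      (esym' n q ^ (p - r) - esym' n p ^ (q - r) * esym' n r ^ (p - q))) := by
  obtain ⟨s, rfl⟩ := Nat.exists_eq_add_of_le hrq
  obtain ⟨k, rfl⟩ := Nat.exists_eq_add_of_le hqp
  rw [← mem_sqSubstSumSq, show r + s + k - r = s + k by omega, Nat.add_sub_cancel_left,
    Nat.add_sub_cancel_left]
  exact lyapunov_sub_mem_of_newton _ esym'_mem_sqSubstSumSq
    (fun _ _ => esym'_newton_mem_sqSubstSumSq) hpn
end

section
/- For nonnegative reals x₁,…,xₙ and integers n ≥ p ≥ q ≥ r ≥ 0, one has E_q(x)^{p−r} ≥ E_p(x)^{q−r} · E_r(x)^{p−q} (Lyapunov-type generalization of Maclaurin's inequality). -/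
/-!
Newton's inequalities `E_k E_{k+2} ≤ E_{k+1}²` hold for nonnegative variables, and in a nonnegative
sequence satisfying them with no internal zeros the ratios `E_{k+1} / E_k` decrease; telescoping
these ratios gives the Lyapunov inequality (discrete concavity of `k ↦ log E_k`).

Newton's inequalities follow by induction on the number of variables: adjoining a variable `x` to
`N - 1` others changes the means by `N E'_k = (N - k) E_k + k x E_{k-1}`, and
`N² (E'_{k+1}² - E'_k E'_{k+2})` is a nonnegative combination of the Newton defects of `E` and a
square.
-/

open Finset

structure IsLogConcaveSeq (a : ℕ → ℝ) : Prop where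
  nonneg : ∀ k, 0 ≤ a k
  mul_le_sq : ∀ k, a k * a (k + 2) ≤ a (k + 1) ^ 2
  eq_zero_succ : ∀ k, a k = 0 → a (k + 1) = 0

namespace IsLogConcaveSeq

variable {a : ℕ → ℝ}

theorem pos_of_succ_ne_zero (ha : IsLogConcaveSeq a) {k : ℕ} (h : a (k + 1) ≠ 0) : 0 < a k :=
  (ha.nonneg k).lt_of_ne' (mt (ha.eq_zero_succ k) h)

theorem mul_succ_le_succ_mul (ha : IsLogConcaveSeq a) {k l : ℕ} (hkl : k ≤ l) :
    a k * a (l + 1) ≤ a (k + 1) * a l := by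
  induction l, hkl using Nat.le_induction with
  | base => rw [mul_comm]
  | succ l _ ih =>
    by_cases h : a (l + 2) = 0
    · rw [h, mul_zero]
      exact mul_nonneg (ha.nonneg _) (ha.nonneg _)
    have hl₁ := ha.pos_of_succ_ne_zero h
    have hl₀ := ha.pos_of_succ_ne_zero hl₁.ne'
    refine le_of_mul_le_mul_right ?_ (mul_pos hl₀ hl₁)
    calc a k * a (l + 2) * (a l * a (l + 1))
        = (a k * a (l + 1)) * (a l * a (l + 2)) := by ring
      _ ≤ (a (k + 1) * a l) * a (l + 1) ^ 2 :=
          mul_le_mul ih (ha.mul_le_sq l) (mul_nonneg (ha.nonneg _) (ha.nonneg _))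
            (mul_nonneg (ha.nonneg _) (ha.nonneg _))
      _ = a (k + 1) * a (l + 1) * (a l * a (l + 1)) := by ring

theorem pow_mul_le_pow_mul (ha : IsLogConcaveSeq a) {p r m : ℕ} (h : r + m ≤ p) :
    a (p + 1) ^ m * a r ≤ a p ^ m * a (r + m) := by
  induction m with
  | zero => simp
  | succ m ih =>
    calc a (p + 1) ^ (m + 1) * a r
        = a (p + 1) * (a (p + 1) ^ m * a r) := by ring
      _ ≤ a (p + 1) * (a p ^ m * a (r + m)) :=
          mul_le_mul_of_nonneg_left (ih (by omega)) (ha.nonneg _)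
      _ = a p ^ m * (a (r + m) * a (p + 1)) := by ring
      _ ≤ a p ^ m * (a (r + m + 1) * a p) :=
          mul_le_mul_of_nonneg_left (ha.mul_succ_le_succ_mul (by omega)) (pow_nonneg (ha.nonneg _) _)
      _ = a p ^ (m + 1) * a (r + (m + 1)) := by rw [← add_assoc]; ring

theorem pow_mul_pow_le_pow (ha : IsLogConcaveSeq a) (r m s : ℕ) :
    a (r + m + s) ^ m * a r ^ s ≤ a (r + m) ^ (m + s) := by
  induction s with
  | zero => simp
  | succ s ih =>
    calc a (r + m + (s + 1)) ^ m * a r ^ (s + 1)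
        = (a (r + m + s + 1) ^ m * a r) * a r ^ s := by rw [← add_assoc, pow_succ]; ring
      _ ≤ (a (r + m + s) ^ m * a (r + m)) * a r ^ s :=
          mul_le_mul_of_nonneg_right (ha.pow_mul_le_pow_mul (by omega)) (pow_nonneg (ha.nonneg _) _)
      _ = a (r + m) * (a (r + m + s) ^ m * a r ^ s) := by ring
      _ ≤ a (r + m) * a (r + m) ^ (m + s) := mul_le_mul_of_nonneg_left ih (ha.nonneg _)
      _ = a (r + m) ^ (m + (s + 1)) := by ring

theorem lyapunov (ha : IsLogConcaveSeq a) {p q r : ℕ} (hrq : r ≤ q) (hqp : q ≤ p) :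
    a p ^ (q - r) * a r ^ (p - q) ≤ a q ^ (p - r) := by
  obtain ⟨m, rfl⟩ := Nat.exists_eq_add_of_le hrq
  obtain ⟨s, rfl⟩ := Nat.exists_eq_add_of_le hqp
  rw [Nat.add_sub_cancel_left, Nat.add_sub_cancel_left, show r + m + s - r = m + s by omega]
  exact ha.pow_mul_pow_le_pow r m s

end IsLogConcaveSeq

/-- If `a k` is the mean `E_k` of `N - 1` numbers, then `adjoinMean N x a k` is the mean `E_k`
of these numbers together with `x` (at `k = 0` the junk value `a (0 - 1)` has coefficient `0`). -/
noncomputable def adjoinMean (N : ℕ) (x : ℝ) (a : ℕ → ℝ) (k : ℕ) : ℝ :=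
  ((N - k) * a k + k * x * a (k - 1)) / N

theorem adjoinMean_zero {N : ℕ} (hN : N ≠ 0) (x : ℝ) (a : ℕ → ℝ) : adjoinMean N x a 0 = a 0 := by
  simp [adjoinMean, hN]

-- `N² (c_{k+1}² - c_k c_{k+2}) ≥ 0` for `c = adjoinMean N x a`, with `aᵢ = a (k - 1 + i)`.
theorem newton_step_inequality {N k x a₀ a₁ a₂ a₃ : ℝ} (hk : 0 ≤ k) (hkN : k + 2 ≤ N) (hx : 0 ≤ x)
    (h₁ : a₁ * a₃ ≤ a₂ ^ 2) (h₂ : k * (a₀ * a₃) ≤ k * (a₁ * a₂))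
    (h₃ : k * (a₀ * a₂) ≤ k * a₁ ^ 2) :
    ((N - k) * a₁ + k * x * a₀) * ((N - (k + 2)) * a₃ + (k + 2) * x * a₂)
      ≤ ((N - (k + 1)) * a₂ + (k + 1) * x * a₁) ^ 2 := by
  have t₁ : 0 ≤ (N - k) * (N - (k + 2)) * (a₂ ^ 2 - a₁ * a₃) :=
    mul_nonneg (mul_nonneg (by linarith) (by linarith)) (by linarith)
  have t₂ : 0 ≤ (N - (k + 2)) * x * (k * (a₁ * a₂) - k * (a₀ * a₃)) :=
    mul_nonneg (mul_nonneg (by linarith) hx) (by linarith)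
  have t₃ : 0 ≤ (k + 2) * x ^ 2 * (k * a₁ ^ 2 - k * (a₀ * a₂)) :=
    mul_nonneg (mul_nonneg (by linarith) (sq_nonneg x)) (by linarith)
  linear_combination t₁ + t₂ + t₃ + sq_nonneg (a₂ - x * a₁)

theorem isLogConcaveSeq_adjoinMean {N : ℕ} {x : ℝ} {a : ℕ → ℝ} (ha : IsLogConcaveSeq a)
    (hN : 0 < N) (htop : ∀ k, N ≤ k → a k = 0) (hx : 0 ≤ x) :
    IsLogConcaveSeq (adjoinMean N x a) := by
  have hN' : (0 : ℝ) < N := Nat.cast_pos.2 hN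
  have hfirst : ∀ k : ℕ, 0 ≤ (N - k : ℝ) * a k := fun k => by
    rcases le_or_gt k N with hk | hk
    · exact mul_nonneg (sub_nonneg.2 (Nat.cast_le.2 hk)) (ha.nonneg k)
    · rw [htop k hk.le, mul_zero]
  have hsecond : ∀ k : ℕ, 0 ≤ k * x * a (k - 1) := fun k =>
    mul_nonneg (mul_nonneg k.cast_nonneg hx) (ha.nonneg _)
  refine ⟨fun k => div_nonneg (add_nonneg (hfirst k) (hsecond k)) hN'.le, fun k => ?_, fun k hk => ?_⟩
  · rcases le_or_gt (k + 2) N with hkN | hkN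
    · rw [adjoinMean, adjoinMean, adjoinMean, div_mul_div_comm, div_pow, ← sq]
      refine div_le_div_of_nonneg_right ?_ (sq_nonneg _)
      push_cast
      refine newton_step_inequality k.cast_nonneg (by exact_mod_cast hkN) hx (ha.mul_le_sq k) ?_ ?_
      · cases k with
        | zero => simp
        | succ j => exact mul_le_mul_of_nonneg_left (ha.mul_succ_le_succ_mul (by omega)) (by positivity)
      · cases k with
        | zero => simp
        | succ j => exact mul_le_mul_of_nonneg_left (ha.mul_le_sq j) (by positivity)
    · have hzero : adjoinMean N x a (k + 2) = 0 := by
        simp [adjoinMean, htop (k + 2) (by omega), htop (k + 1) (by omega)]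
      rw [hzero, mul_zero]
      exact sq_nonneg _
  · have hak : a k = 0 := by
      rcases le_or_gt N k with hkN | hkN
      · exact htop k hkN
      have hsum := (div_eq_zero_iff.1 hk).resolve_right hN'.ne'
      have hprod : (N - k : ℝ) * a k = 0 := by linarith [hfirst k, hsecond k]
      exact (mul_eq_zero.1 hprod).resolve_left (sub_ne_zero.2 (by exact_mod_cast hkN.ne'))
    simp [adjoinMean, hak, ha.eq_zero_succ k hak]

namespace Multiset

section CommSemiring

variable {R : Type*} [CommSemiring R]

theorem esymm_zero_right (s : Multiset R) : s.esymm 0 = 1 := by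
  simp [esymm, powersetCard_zero_left]

theorem esymm_eq_zero_of_card_lt {s : Multiset R} {k : ℕ} (h : card s < k) : s.esymm k = 0 := by
  simp [esymm, powersetCard_eq_empty _ h]

theorem esymm_cons_succ_s16 (x : R) (s : Multiset R) (k : ℕ) :
    (x ::ₘ s).esymm (k + 1) = s.esymm (k + 1) + x * s.esymm k := by
  simp [esymm, powersetCard_cons, map_map, sum_map_mul_left]

end CommSemiring

noncomputable def esymmMean (s : Multiset ℝ) (k : ℕ) : ℝ :=
  ((card s).choose k : ℝ)⁻¹ * s.esymm k

theorem esymmMean_zero_right (s : Multiset ℝ) : esymmMean s 0 = 1 := by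
  simp [esymmMean, esymm_zero_right]

theorem esymmMean_eq_zero_of_card_lt {s : Multiset ℝ} {k : ℕ} (h : card s < k) :
    esymmMean s k = 0 := by
  rw [esymmMean, esymm_eq_zero_of_card_lt h, mul_zero]

theorem card_succ_sub_mul_esymmMean (s : Multiset ℝ) (k : ℕ) :
    ((card s : ℝ) + 1 - k) * esymmMean s k
      = ((card s : ℝ) + 1) * ((card s + 1).choose k : ℝ)⁻¹ * s.esymm k := by
  rcases le_or_gt k (card s) with hk | hk
  · have hchoose := Nat.choose_mul_succ_eq (card s) k
    have hpos : (0 : ℝ) < (card s).choose k := Nat.cast_pos.2 (Nat.choose_pos hk)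
    have hpos' : (0 : ℝ) < (card s + 1).choose k := Nat.cast_pos.2 (Nat.choose_pos (by omega))
    rw [esymmMean]
    field_simp
    have hchoose' := congrArg (Nat.cast : ℕ → ℝ) hchoose
    push_cast [Nat.cast_sub (show k ≤ card s + 1 by omega)] at hchoose'
    linear_combination (-s.esymm k) * hchoose'
  · simp [esymmMean, esymm_eq_zero_of_card_lt hk]

theorem succ_mul_esymmMean (s : Multiset ℝ) (k : ℕ) :
    ((k : ℝ) + 1) * esymmMean s k
      = ((card s : ℝ) + 1) * ((card s + 1).choose (k + 1) : ℝ)⁻¹ * s.esymm k := by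
  rcases le_or_gt k (card s) with hk | hk
  · have hchoose := congrArg (Nat.cast : ℕ → ℝ) (Nat.add_one_mul_choose_eq (card s) k)
    have hpos : (0 : ℝ) < (card s).choose k := Nat.cast_pos.2 (Nat.choose_pos hk)
    have hpos' : (0 : ℝ) < (card s + 1).choose (k + 1) := Nat.cast_pos.2 (Nat.choose_pos (by omega))
    rw [esymmMean]
    field_simp
    push_cast at hchoose
    linear_combination (-s.esymm k) * hchoose
  · simp [esymmMean, esymm_eq_zero_of_card_lt hk]

theorem esymmMean_cons (x : ℝ) (s : Multiset ℝ) :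
    esymmMean (x ::ₘ s) = adjoinMean (card s + 1) x (esymmMean s) := by
  funext k
  cases k with
  | zero => rw [adjoinMean_zero (by omega), esymmMean_zero_right, esymmMean_zero_right]
  | succ k =>
    have h₁ := card_succ_sub_mul_esymmMean s (k + 1)
    have h₂ := succ_mul_esymmMean s k
    have hN : (card s : ℝ) + 1 ≠ 0 := by positivity
    rw [adjoinMean, esymmMean, esymm_cons_succ_s16, card_cons]
    push_cast at h₁ ⊢
    rw [eq_div_iff hN]
    linear_combination -h₁ - x * h₂

theorem isLogConcaveSeq_esymmMean {s : Multiset ℝ} (hs : ∀ x ∈ s, 0 ≤ x) :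
    IsLogConcaveSeq (esymmMean s) := by
  induction s using Multiset.induction_on with
  | empty =>
    have hsucc (k : ℕ) : esymmMean 0 (k + 1) = 0 := esymmMean_eq_zero_of_card_lt (by simp)
    refine ⟨fun k => ?_, fun k => by simp [hsucc], fun k _ => hsucc k⟩
    cases k with
    | zero => rw [esymmMean_zero_right]; exact zero_le_one
    | succ k => rw [hsucc]
  | cons x s ih =>
    rw [esymmMean_cons]
    exact isLogConcaveSeq_adjoinMean (ih fun y hy => hs y (mem_cons_of_mem hy)) (Nat.succ_pos _)
      (fun k hk => esymmMean_eq_zero_of_card_lt hk) (hs x (mem_cons_self x s))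

end Multiset

theorem E_eq_esymmMean (n m : ℕ) (x : Fin n → ℝ) :
    E n m x = Multiset.esymmMean (univ.val.map x) m := by
  rw [E, Multiset.esymmMean, Finset.esymm_map_val, Multiset.card_map, Finset.card_val,
    Finset.card_univ, Fintype.card_fin]

theorem maclaurin_lyapunov_general (n p q r : ℕ) (hqp : q ≤ p) (hrq : r ≤ q)
    (x : Fin n → ℝ) (hx : ∀ j, 0 ≤ x j) :
    E n p x ^ (q - r) * E n r x ^ (p - q) ≤ E n q x ^ (p - r) := by
  simp only [E_eq_esymmMean]
  exact (Multiset.isLogConcaveSeq_esymmMean (by simpa using hx)).lyapunov hrq hqp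

theorem maclaurin_lyapunov (n p q r : ℕ) (hqp : q ≤ p) (hrq : r ≤ q) (hpn : p ≤ n)
    (x : Fin n → ℝ) (hx : ∀ j, 0 ≤ x j) :
    E n p x ^ (q - r) * E n r x ^ (p - q) ≤ E n q x ^ (p - r) :=
  maclaurin_lyapunov_general n p q r hqp hrq x hx
end

section
/- For each 0 ≤ k ≤ n, the polynomial Σ_{I ⊆ {1,…,n}, |I|=k} (Π_{i∈I} x_iⁿ · Π_{j∉I} y_jⁿ) − C(n,k) · Π_{i=1}^n x_i^k y_i^{n−k} is nonnegative for all nonnegative reals x₁,…,xₙ,y₁,…,yₙ. -/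
/-!
AM-GM applied to the `C(n,k)` terms of the sum: each index `i` lies in `k·C(n,k)/n` of the
`k`-subsets and outside `(n-k)·C(n,k)/n` of them, so the product of all the terms is the
`C(n,k)`-th power of `∏ i, x i ^ k * y i ^ (n - k)`, and their arithmetic mean dominates it.
-/

open Finset

section Counting

variable {α : Type*} [DecidableEq α] {s : Finset α} {a : α}

theorem card_mul_card_filter_mem_powersetCard (ha : a ∈ s) (k : ℕ) :
    #s * #{I ∈ s.powersetCard k | a ∈ I} = k * (#s).choose k := by
  obtain ⟨m, hm⟩ : ∃ m, #s = m + 1 := Nat.exists_eq_add_one.2 (card_pos.2 ⟨a, ha⟩)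
  cases k with
  | zero => simp
  | succ k =>
    have hsub : {a} ⊆ s := singleton_subset_iff.2 ha
    simp_rw [← singleton_subset_iff (a := a)]
    rw [card_filter_powersetCard_subset _ _ _ hsub (by simp), card_singleton, hm,
      Nat.add_sub_cancel, Nat.add_sub_cancel, Nat.add_one_mul_choose_eq, mul_comm]

theorem card_mul_card_filter_notMem_powersetCard (ha : a ∈ s) (k : ℕ) :
    #s * #{I ∈ s.powersetCard k | a ∉ I} = (#s - k) * (#s).choose k := by
  obtain ⟨m, hm⟩ : ∃ m, #s = m + 1 := Nat.exists_eq_add_one.2 (card_pos.2 ⟨a, ha⟩)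
  have herase : {I ∈ s.powersetCard k | a ∉ I} = (s.erase a).powersetCard k := by
    ext I
    simp [mem_powersetCard, subset_erase, and_right_comm]
  rw [herase, card_powersetCard, card_erase_of_mem ha, hm, Nat.add_sub_cancel, mul_comm,
    Nat.choose_mul_succ_eq, mul_comm]

end Counting

theorem prod_prod_mul_prod_compl_eq {ι M : Type*} [Fintype ι] [DecidableEq ι] [CommMonoid M]
    (P : Finset (Finset ι)) (a b : ι → M) :
    ∏ I ∈ P, (∏ i ∈ I, a i) * ∏ i ∈ Iᶜ, b i =
      ∏ i, a i ^ #{I ∈ P | i ∈ I} * b i ^ #{I ∈ P | i ∉ I} := by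
  have hrow (I : Finset ι) : (∏ i ∈ I, a i) * ∏ i ∈ Iᶜ, b i = ∏ i, if i ∈ I then a i else b i := by
    rw [prod_ite, filter_mem_eq_inter, univ_inter, filter_not, filter_mem_eq_inter, univ_inter,
      compl_eq_univ_sdiff]
  simp_rw [hrow]
  rw [prod_comm]
  refine prod_congr rfl fun i _ => ?_
  rw [prod_ite, prod_const, prod_const]

theorem prod_powersetCard_eq_pow_choose {ι M : Type*} [Fintype ι] [DecidableEq ι] [CommMonoid M]
    {n : ℕ} (hn : Fintype.card ι = n) (k : ℕ) (a b : ι → M) :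
    ∏ I ∈ powersetCard k univ, (∏ i ∈ I, a i ^ n) * ∏ i ∈ Iᶜ, b i ^ n =
      (∏ i, a i ^ k * b i ^ (n - k)) ^ n.choose k := by
  subst hn
  rw [prod_prod_mul_prod_compl_eq, ← prod_pow]
  refine prod_congr rfl fun i _ => ?_
  rw [← pow_mul, ← pow_mul, ← card_univ, card_mul_card_filter_mem_powersetCard (mem_univ i),
    card_mul_card_filter_notMem_powersetCard (mem_univ i), mul_pow, ← pow_mul, ← pow_mul]

theorem card_mul_le_sum_of_prod_eq_pow {ι : Type*} {s : Finset ι} {z : ι → ℝ}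
    (hz : ∀ i ∈ s, 0 ≤ z i) {g : ℝ} (h : ∏ i ∈ s, z i = g ^ #s) : #s * g ≤ ∑ i ∈ s, z i := by
  rcases s.eq_empty_or_nonempty with rfl | hs
  · simp
  have hcard : (0 : ℝ) < #s := by exact_mod_cast hs.card_pos
  have amgm := Real.geom_mean_le_arith_mean s (fun _ => 1) z (by simp) (by simpa using hcard) hz
  simp only [Real.rpow_one, one_mul, sum_const, nsmul_eq_mul, mul_one] at amgm
  have habs : ∏ i ∈ s, z i = |g| ^ #s := by rw [pow_abs, ← h, abs_of_nonneg (prod_nonneg hz)]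
  rw [habs, Real.pow_rpow_inv_natCast (abs_nonneg g) hs.card_pos.ne', le_div_iff₀ hcard] at amgm
  nlinarith [le_abs_self g]

theorem minkowski_term_nonneg_general (n k : ℕ)
    (x y : Fin n → ℝ) (hx : ∀ i, 0 ≤ x i) (hy : ∀ i, 0 ≤ y i) :
    0 ≤ (∑ I ∈ powersetCard k (univ : Finset (Fin n)),
          (∏ i ∈ I, x i ^ n) * ∏ j ∈ Iᶜ, y j ^ n) -
        (n.choose k : ℝ) * ∏ i, x i ^ k * y i ^ (n - k) := by
  rw [sub_nonneg]
  have hcard : #(powersetCard k (univ : Finset (Fin n))) = n.choose k := by simp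
  rw [← hcard]
  refine card_mul_le_sum_of_prod_eq_pow (fun I _ => ?_) ?_
  · exact mul_nonneg (prod_nonneg fun i _ => pow_nonneg (hx i) n)
      (prod_nonneg fun j _ => pow_nonneg (hy j) n)
  · rw [hcard]
    exact prod_powersetCard_eq_pow_choose (Fintype.card_fin n) k x y

theorem minkowski_term_nonneg (n k : ℕ) (hk : k ≤ n)
    (x y : Fin n → ℝ) (hx : ∀ i, 0 ≤ x i) (hy : ∀ i, 0 ≤ y i) :
    0 ≤ (∑ I ∈ powersetCard k (univ : Finset (Fin n)),
          (∏ i ∈ I, x i ^ n) * ∏ j ∈ Iᶜ, y j ^ n) -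
        (n.choose k : ℝ) * ∏ i, x i ^ k * y i ^ (n - k) :=
  minkowski_term_nonneg_general n k x y hx hy
end
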